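/- arXiv:1005.3922 — 4 statements merged into one kernel-verified Lean document; each statement's English description precedes it below -/
import Mathlib

section
/- Let R_η be Bernoulli with parameter η and G an independent standard Gaussian. Set B_η = R_η · ηG·1_{|ηG| ≤ 1}. Then for every smooth compactly supported φ, E(φ(B_η)) = φ(0) + (η³/2)φ''(0) + o(η³) as η → 0⁺. -/
open MeasureTheory Asymptotics Topology ProbabilityTheory

open Real MeasureTheory ProbabilityTheory Filter Set
open scoped NNReal ENNReal
open Topology Asymptotics

noncomputable def gam : Measure ℝ := gaussianReal 0 1
instance : IsProbabilityMeasure gam := by unfold gam; infer_instance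

lemma pdf_eq (x : ℝ) : gaussianPDFReal 0 1 x = (√(2*π))⁻¹ * rexp (-x^2/2) := by
  simp [gaussianPDFReal]

lemma gam_eq : gam = volume.withDensity (gaussianPDF 0 1) :=
  gaussianReal_of_var_ne_zero 0 one_ne_zero

lemma integral_gam (g : ℝ → ℝ) :
    ∫ x, g x ∂gam = ∫ x, gaussianPDFReal 0 1 x * g x := by
  rw [gam_eq]
  have h : (gaussianPDF 0 1) = fun x => ((gaussianPDFReal 0 1 x).toNNReal : ℝ≥0∞) := rfl
  rw [h, integral_withDensity_eq_integral_smul (by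
    exact (measurable_gaussianPDFReal 0 1).real_toNNReal) g]
  congr 1; funext x
  rw [NNReal.smul_def, Real.coe_toNNReal _ (gaussianPDFReal_nonneg 0 1 x), smul_eq_mul]

lemma integrable_gam_iff {g : ℝ → ℝ} :
    Integrable g gam ↔ Integrable (fun x => g x * gaussianPDFReal 0 1 x) volume := by
  rw [gam_eq, integrable_withDensity_iff (measurable_gaussianPDF 0 1)
    (Filter.Eventually.of_forall fun x => ENNReal.ofReal_lt_top)]
  constructor <;> intro h <;> refine h.congr (Filter.Eventually.of_forall fun x => ?_) <;>
    simp [gaussianPDF, ENNReal.toReal_ofReal (gaussianPDFReal_nonneg 0 1 x)]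

lemma intpow (k : ℕ) : Integrable (fun x : ℝ => x ^ k * rexp (-x^2/2)) := by
  have h := integrable_rpow_mul_exp_neg_mul_sq (b := 1/2) (by norm_num) (s := k)
    (lt_of_lt_of_le neg_one_lt_zero (Nat.cast_nonneg k))
  refine h.congr (Filter.Eventually.of_forall fun x => ?_)
  show x ^ (k:ℝ) * rexp (-(1/2) * x^2) = x ^ k * rexp (-x^2/2)
  rw [rpow_natCast]; ring_nf

lemma intabs3 : Integrable (fun x : ℝ => |x| ^ 3 * rexp (-x^2/2)) := by
  have := (intpow 3).abs
  refine this.congr (Filter.Eventually.of_forall fun x => ?_)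
  simp [abs_mul, abs_pow, Real.abs_exp]

lemma int_e : (∫ x : ℝ, rexp (-x^2/2)) = √(2*π) := by
  have h := integral_gaussian (1/2)
  have h2 : (fun x : ℝ => rexp (-(1/2) * x^2)) = fun x => rexp (-x^2/2) := by
    funext x; ring_nf
  rw [h2] at h
  rw [h]; rw [show π / (1/2) = 2*π by ring]

lemma tend_exp_half : Tendsto (fun x : ℝ => rexp (-(1/2)*x)) atTop (nhds 0) :=
  tendsto_exp_atBot.comp ((tendsto_const_mul_atBot_of_neg (by norm_num : -(1/2:ℝ) < 0)).2 tendsto_id)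

lemma tend_top : Tendsto (fun x : ℝ => -x * rexp (-x^2/2)) atTop (nhds 0) := by
  have h := rpow_mul_exp_neg_mul_sq_isLittleO_exp_neg (b := 1/2) (by norm_num) 1
  have heq : (fun x : ℝ => -x * rexp (-x^2/2)) = fun x => -(x ^ (1:ℝ) * rexp (-(1/2) * x^2)) := by
    funext x; rw [rpow_one]; ring_nf
  have h2 : (fun x : ℝ => -x * rexp (-x^2/2)) =o[atTop] fun x => rexp (-(1/2)*x) := by
    rw [heq]; exact h.neg_left
  exact h2.tendsto_zero_of_tendsto tend_exp_half

lemma tend_bot : Tendsto (fun x : ℝ => -x * rexp (-x^2/2)) atBot (nhds 0) := by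
  have h := tend_top.comp tendsto_neg_atBot_atTop
  have h2 : Tendsto (fun x : ℝ => x * rexp (-x^2/2)) atBot (nhds (0:ℝ)) :=
    h.congr fun x => by simp [Function.comp]
  simpa using h2.neg

lemma int_x2e : (∫ x : ℝ, x^2 * rexp (-x^2/2)) = √(2*π) := by
  have hderiv : ∀ x : ℝ, HasDerivAt (fun y : ℝ => -y * rexp (-y^2/2))
      (x^2 * rexp (-x^2/2) - rexp (-x^2/2)) x := by
    intro x
    have h1 : HasDerivAt (fun y : ℝ => -y^2/2) (-x) x := by
      have h := ((hasDerivAt_pow 2 x).neg).div_const 2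
      exact h.congr_deriv (by norm_num; ring)
    have h2 : HasDerivAt (fun y : ℝ => rexp (-y^2/2)) (rexp (-x^2/2) * (-x)) x :=
      (Real.hasDerivAt_exp _).comp x h1
    have h3 := (hasDerivAt_neg x).mul h2
    exact h3.congr_deriv (by ring)
  have hint : Integrable (fun x : ℝ => x^2 * rexp (-x^2/2) - rexp (-x^2/2)) := by
    have := (intpow 2).sub (intpow 0)
    simpa [Pi.sub_def] using this
  have h := integral_of_hasDerivAt_of_tendsto hderiv hint tend_bot tend_top
  rw [integral_sub (intpow 2) (by simpa using intpow 0)] at h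
  simp at h
  have := int_e
  linarith

-- moments on gam
lemma pdf_mul (g : ℝ → ℝ) :
    (fun x => g x * gaussianPDFReal 0 1 x) = fun x => (√(2*π))⁻¹ * (g x * rexp (-x^2/2)) := by
  funext x; rw [pdf_eq]; ring

lemma integrable_gam_of_pow {g : ℝ → ℝ} (k : ℕ) (hg : AEStronglyMeasurable g volume)
    (hb : ∀ x, |g x| ≤ |x| ^ k) : Integrable g gam := by
  rw [integrable_gam_iff]
  have hint : Integrable (fun x : ℝ => |x| ^ k * rexp (-x^2/2)) := by
    have := (intpow k).abs
    refine this.congr (Filter.Eventually.of_forall fun x => ?_)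
    simp [abs_mul, abs_pow, Real.abs_exp]
  refine Integrable.mono' (hint.const_mul ((√(2*π))⁻¹)) ?_ ?_
  · exact hg.mul (measurable_gaussianPDFReal 0 1).aestronglyMeasurable
  · refine Filter.Eventually.of_forall fun x => ?_
    rw [Real.norm_eq_abs, abs_mul, pdf_eq, abs_mul]
    have h0 : (0:ℝ) ≤ (√(2*π))⁻¹ := by positivity
    rw [abs_of_nonneg h0, Real.abs_exp]
    calc |g x| * ((√(2*π))⁻¹ * rexp (-x^2/2))
        ≤ |x|^k * ((√(2*π))⁻¹ * rexp (-x^2/2)) := by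
          apply mul_le_mul_of_nonneg_right (hb x); positivity
      _ = (√(2*π))⁻¹ * (|x|^k * rexp (-x^2/2)) := by ring

lemma gam_int_sq : ∫ x, x^2 ∂gam = 1 := by
  rw [integral_gam, show (fun x : ℝ => gaussianPDFReal 0 1 x * x^2) =
    fun x => (√(2*π))⁻¹ * (x^2 * rexp (-x^2/2)) from by funext x; rw [pdf_eq]; ring,
    integral_const_mul, int_x2e]
  rw [inv_mul_cancel₀ (by positivity)]

lemma gam_intabs3 : Integrable (fun x : ℝ => |x|^3) gam :=
  integrable_gam_of_pow 3 (measurable_abs.pow_const 3).aestronglyMeasurable (fun x => le_of_eq (by simp))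

lemma gam_map_neg : gam.map (fun x => -x) = gam := by
  have h := gaussianReal_map_const_mul (μ := 0) (v := 1) (-1)
  have h2 : (fun x : ℝ => -1 * x) = fun x : ℝ => -x := by funext x; ring
  rw [h2] at h
  unfold gam
  rw [h]
  norm_num

lemma gam_odd_zero {f : ℝ → ℝ} (hf : AEStronglyMeasurable f gam)
    (hodd : ∀ x, f (-x) = - f x) : ∫ x, f x ∂gam = 0 := by
  have h1 : ∫ x, f x ∂gam = ∫ x, f (-x) ∂gam := by
    conv_lhs => rw [← gam_map_neg]
    rw [integral_map measurable_neg.aemeasurable (by rw [gam_map_neg]; exact hf)]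
  have h2 : ∫ x, f (-x) ∂gam = - ∫ x, f x ∂gam := by
    simp only [hodd]; exact integral_neg f
  rw [h2] at h1; linarith

lemma abs_le_of_mem_uIcc {x y : ℝ} (h : x ∈ Set.uIcc 0 y) : |x| ≤ |y| := by
  rcases le_total 0 y with h'|h'
  · rw [Set.uIcc_of_le h'] at h
    rw [abs_le]
    constructor <;> [skip; skip] <;>
      · have := h.1; have := h.2; have := le_abs_self y; have := neg_abs_le y; linarith
  · rw [Set.uIcc_of_ge h'] at h
    rw [abs_le]
    constructor <;>
      · have := h.1; have := h.2; have := le_abs_self y; have := neg_abs_le y;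
        have := abs_of_nonpos h'; linarith

lemma taylor3 {φ : ℝ → ℝ} (hφ : ContDiff ℝ ((⊤:ℕ∞):WithTop ℕ∞) φ) {M : ℝ}
    (hM : ∀ y, |deriv (deriv (deriv φ)) y| ≤ M) (y : ℝ) :
    |φ y - φ 0 - deriv φ 0 * y - deriv (deriv φ) 0 * y^2/2| ≤ M * |y|^3 := by
  set φ1 := deriv φ with hφ1def
  set φ2 := deriv φ1 with hφ2def
  set φ3 := deriv φ2 with hφ3def
  have hφ1 : ContDiff ℝ ((⊤:ℕ∞):WithTop ℕ∞) φ1 := (contDiff_infty_iff_deriv.mp hφ).2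
  have hφ2 : ContDiff ℝ ((⊤:ℕ∞):WithTop ℕ∞) φ2 := (contDiff_infty_iff_deriv.mp hφ1).2
  have claim2 : ∀ z, |φ2 z - φ2 0| ≤ M * |z| := by
    intro z
    have h := convex_univ.norm_image_sub_le_of_norm_deriv_le (f := φ2) (C := M)
      (fun x _ => (hφ2.differentiable (by simp)).differentiableAt)
      (fun x _ => hM x) (Set.mem_univ 0) (Set.mem_univ z)
    simpa [Real.norm_eq_abs] using h
  have claim1 : ∀ z, |φ1 z - φ1 0 - φ2 0 * z| ≤ M * |z|^2 := by
    intro z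
    set g := fun w : ℝ => φ1 w - φ1 0 - φ2 0 * w with hg
    have hd : ∀ w, HasDerivAt g (φ2 w - φ2 0) w := by
      intro w
      have h1 : HasDerivAt φ1 (φ2 w) w := (hφ1.differentiable (by simp)).differentiableAt.hasDerivAt
      have := (h1.sub_const (φ1 0)).sub ((hasDerivAt_id w).const_mul (φ2 0))
      exact this.congr_deriv (by ring)
    have h := (convex_uIcc (0:ℝ) z).norm_image_sub_le_of_norm_hasDerivWithin_le
      (f' := fun w => φ2 w - φ2 0) (C := M * |z|)
      (fun x _ => (hd x).hasDerivWithinAt)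
      (fun x hx => by
        have := (claim2 x).trans (mul_le_mul_of_nonneg_left (abs_le_of_mem_uIcc hx)
          (le_trans (abs_nonneg _) (hM 0)))
        simpa [Real.norm_eq_abs] using this)
      Set.left_mem_uIcc Set.right_mem_uIcc
    have hg0 : g 0 = 0 := by simp [hg]
    rw [hg0, sub_zero, Real.norm_eq_abs, Real.norm_eq_abs, sub_zero] at h
    calc |g z| ≤ M * |z| * |z| := h
      _ = M * |z|^2 := by ring
  set g2 := fun w : ℝ => φ w - φ 0 - φ1 0 * w - φ2 0 * w^2/2 with hg2
  have hd2 : ∀ w, HasDerivAt g2 (φ1 w - φ1 0 - φ2 0 * w) w := by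
    intro w
    have h1 : HasDerivAt φ (φ1 w) w := (hφ.differentiable (by simp)).differentiableAt.hasDerivAt
    have := ((h1.sub_const (φ 0)).sub ((hasDerivAt_id w).const_mul (φ1 0))).sub
      (((hasDerivAt_pow 2 w).const_mul (φ2 0)).div_const 2)
    exact this.congr_deriv (by norm_num; ring)
  have h := (convex_uIcc (0:ℝ) y).norm_image_sub_le_of_norm_hasDerivWithin_le
    (f' := fun w => φ1 w - φ1 0 - φ2 0 * w) (C := M * |y|^2)
    (fun x _ => (hd2 x).hasDerivWithinAt)
    (fun x hx => by
      have h2 : |x|^2 ≤ |y|^2 := by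
        apply pow_le_pow_left₀ (abs_nonneg _) (abs_le_of_mem_uIcc hx)
      have := (claim1 x).trans (mul_le_mul_of_nonneg_left h2
        (le_trans (abs_nonneg _) (hM 0)))
      simpa [Real.norm_eq_abs] using this)
    Set.left_mem_uIcc Set.right_mem_uIcc
  have hg0 : g2 0 = 0 := by simp [hg2]
  rw [hg0, sub_zero, Real.norm_eq_abs, Real.norm_eq_abs, sub_zero] at h
  show |g2 y| ≤ M * |y|^3
  calc |g2 y| ≤ M * |y|^2 * |y| := h
    _ = M * |y|^3 := by ring

lemma key {φ : ℝ → ℝ} (hφ : ContDiff ℝ ((⊤:ℕ∞):WithTop ℕ∞) φ) (hφc : HasCompactSupport φ) :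
    ∃ C : ℝ, 0 ≤ C ∧ ∀ η ∈ Set.Ioo (0:ℝ) 1,
      |(∫ x, (φ (if |η*x| ≤ 1 then η*x else 0) - φ 0) ∂gam) - η^2/2 * deriv (deriv φ) 0|
        ≤ C * η^3 := by
  -- bound on third derivative
  have hφ1 : ContDiff ℝ ((⊤:ℕ∞):WithTop ℕ∞) (deriv φ) := (contDiff_infty_iff_deriv.mp hφ).2
  have hφ2 : ContDiff ℝ ((⊤:ℕ∞):WithTop ℕ∞) (deriv (deriv φ)) :=
    (contDiff_infty_iff_deriv.mp hφ1).2
  have hφ3 : ContDiff ℝ ((⊤:ℕ∞):WithTop ℕ∞) (deriv (deriv (deriv φ))) :=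
    (contDiff_infty_iff_deriv.mp hφ2).2
  obtain ⟨M0, hM0⟩ := (hφc.deriv.deriv.deriv).exists_bound_of_continuous hφ3.continuous
  set M := max M0 0 with hMdef
  have hMnn : 0 ≤ M := le_max_right _ _
  have hM : ∀ y, |deriv (deriv (deriv φ)) y| ≤ M := fun y =>
    le_trans (by simpa [Real.norm_eq_abs] using hM0 y) (le_max_left _ _)
  set d2 := deriv (deriv φ) 0 with hd2def
  set M3 := ∫ x, |x|^3 ∂gam with hM3def
  have hM3nn : 0 ≤ M3 := integral_nonneg fun x => by positivity
  refine ⟨(|d2|/2 + M) * M3, by positivity, ?_⟩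
  rintro η ⟨hη0, hη1⟩
  set t : ℝ → ℝ := fun x => if |η*x| ≤ 1 then η*x else 0 with htdef
  have ht : Measurable t := Measurable.ite
    (measurableSet_le (measurable_id.const_mul η).abs measurable_const)
    (measurable_id.const_mul η) measurable_const
  have htb : ∀ x, |t x| ≤ η * |x| := by
    intro x
    simp only [htdef]
    split_ifs with h
    · rw [abs_mul, abs_of_pos hη0]
    · simp; positivity
  have htb1 : ∀ x, |t x| ≤ |x| := fun x => (htb x).trans (by
    apply mul_le_of_le_one_left (abs_nonneg x) hη1.le)
  -- remainder function
  set r : ℝ → ℝ := fun y => φ y - φ 0 - deriv φ 0 * y - d2 * y^2/2 with hrdef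
  have hrc : Continuous r := by
    apply (((hφ.continuous.sub continuous_const).sub
      (continuous_const.mul continuous_id)).sub ?_)
    exact (continuous_const.mul (continuous_pow 2)).div_const 2
  have hrb : ∀ y, |r y| ≤ M * |y|^3 := fun y => taylor3 hφ hM y
  -- integrability
  have it : Integrable t gam := integrable_gam_of_pow 1 ht.aestronglyMeasurable
    (fun x => by simpa using htb1 x)
  have it2 : Integrable (fun x => t x ^ 2) gam := integrable_gam_of_pow 2
    ((ht.pow_const 2).aestronglyMeasurable)
    (fun x => by
      rw [abs_pow]
      exact pow_le_pow_left₀ (abs_nonneg _) (htb1 x) 2)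
  have ix2 : Integrable (fun x : ℝ => x ^ 2) gam := integrable_gam_of_pow 2
    ((measurable_id.pow_const 2).aestronglyMeasurable)
    (fun x => by rw [abs_pow])
  have irt : Integrable (fun x => r (t x)) gam := by
    refine Integrable.mono' (gam_intabs3.const_mul (M * η^3))
      (hrc.measurable.comp ht).aestronglyMeasurable
      (Filter.Eventually.of_forall fun x => ?_)
    rw [Real.norm_eq_abs]
    calc |r (t x)| ≤ M * |t x|^3 := hrb _
      _ ≤ M * (η * |x|)^3 := by
          apply mul_le_mul_of_nonneg_left (pow_le_pow_left₀ (abs_nonneg _) (htb x) 3) hMnn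
      _ = M * η^3 * |x|^3 := by ring
  -- the truncation error term
  set u : ℝ → ℝ := fun x => if |η*x| ≤ 1 then 0 else η^2*x^2 with hudef
  have hut : ∀ x, t x ^ 2 = η^2 * x^2 - u x := by
    intro x
    simp only [htdef, hudef]
    split_ifs <;> ring
  have iu : Integrable u gam := by
    have := (ix2.const_mul (η^2)).sub it2
    refine this.congr (Filter.Eventually.of_forall fun x => ?_)
    simp only [Pi.sub_apply]
    rw [hut x]; ring
  have hub : ∀ x, u x ∈ Set.Icc 0 (η^3 * |x|^3) := by
    intro x
    simp only [hudef]
    split_ifs with h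
    · exact ⟨le_refl 0, by positivity⟩
    · push_neg at h
      have h1 : 1 ≤ η * |x| := by
        have := h.le
        rw [abs_mul, abs_of_pos hη0] at this
        linarith
      refine ⟨by positivity, ?_⟩
      have : η^2 * x^2 = η^2 * |x|^2 := by rw [sq_abs]
      rw [this, show η^3 * |x|^3 = (η * |x|) * (η^2 * |x|^2) by ring]
      nth_rewrite 1 [show η^2 * |x|^2 = 1 * (η^2 * |x|^2) by ring]
      apply mul_le_mul_of_nonneg_right h1 (by positivity)
  -- compute integrals
  have hA : ∫ x, t x ∂gam = 0 := by
    apply gam_odd_zero (it.aestronglyMeasurable)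
    intro x
    simp only [htdef, abs_mul, abs_neg, mul_neg]
    split_ifs <;> simp
  have hB : ∫ x, t x ^ 2 ∂gam = η^2 - ∫ x, u x ∂gam := by
    have : (fun x => t x ^ 2) = fun x => η^2 * x^2 - u x := funext hut
    rw [this, integral_sub (ix2.const_mul (η^2)) iu, integral_const_mul, gam_int_sq, mul_one]
  have hUb : |∫ x, u x ∂gam| ≤ η^3 * M3 := by
    rw [abs_of_nonneg (integral_nonneg fun x => (hub x).1)]
    calc ∫ x, u x ∂gam ≤ ∫ x, η^3 * |x|^3 ∂gam :=
          integral_mono iu (gam_intabs3.const_mul _) fun x => (hub x).2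
      _ = η^3 * M3 := integral_const_mul _ _
  have hRb : |∫ x, r (t x) ∂gam| ≤ M * η^3 * M3 := by
    calc |∫ x, r (t x) ∂gam| ≤ ∫ x, |r (t x)| ∂gam := by
          simpa [Real.norm_eq_abs] using
            MeasureTheory.norm_integral_le_integral_norm (μ := gam) (fun x => r (t x))
      _ ≤ ∫ x, M * η^3 * |x|^3 ∂gam := by
          refine integral_mono irt.abs (gam_intabs3.const_mul _) fun x => ?_
          calc |r (t x)| ≤ M * |t x|^3 := hrb _
            _ ≤ M * (η * |x|)^3 := by
                apply mul_le_mul_of_nonneg_left (pow_le_pow_left₀ (abs_nonneg _) (htb x) 3) hMnn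
            _ = M * η^3 * |x|^3 := by ring
      _ = M * η^3 * M3 := integral_const_mul _ _
  -- decompose the integral
  have hsplit : (fun x => φ (t x) - φ 0) =
      fun x => deriv φ 0 * t x + (d2/2) * t x ^ 2 + r (t x) := by
    funext x; simp only [hrdef]; ring
  have i12 : Integrable (fun x => deriv φ 0 * t x + d2/2 * t x ^ 2) gam :=
    (it.const_mul _).add (it2.const_mul _)
  rw [show (∫ x, (φ (if |η*x| ≤ 1 then η*x else 0) - φ 0) ∂gam)
      = ∫ x, (φ (t x) - φ 0) ∂gam from rfl, hsplit,
    integral_add i12 irt, integral_add (it.const_mul _) (it2.const_mul _),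
    integral_const_mul, integral_const_mul, hA, hB]
  have est : |d2/2 * (η^2 - ∫ x, u x ∂gam) + ∫ x, r (t x) ∂gam - η^2/2 * d2|
      ≤ (|d2|/2 + M) * M3 * η^3 := by
    have h1 : d2/2 * (η^2 - ∫ x, u x ∂gam) + (∫ x, r (t x) ∂gam) - η^2/2 * d2
        = -(d2/2) * (∫ x, u x ∂gam) + ∫ x, r (t x) ∂gam := by ring
    rw [h1]
    calc |(-(d2/2)) * (∫ x, u x ∂gam) + ∫ x, r (t x) ∂gam|
        ≤ |(-(d2/2)) * (∫ x, u x ∂gam)| + |∫ x, r (t x) ∂gam| := abs_add_le _ _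
      _ ≤ |d2|/2 * (η^3 * M3) + M * η^3 * M3 := by
          apply add_le_add _ hRb
          rw [abs_mul, abs_neg, abs_div, abs_two]
          apply mul_le_mul_of_nonneg_left hUb (by positivity)
      _ = (|d2|/2 + M) * M3 * η^3 := by ring
  calc |deriv φ 0 * 0 + d2/2 * (η^2 - ∫ x, u x ∂gam) + (∫ x, r (t x) ∂gam) - η^2/2 * d2|
      = |d2/2 * (η^2 - ∫ x, u x ∂gam) + (∫ x, r (t x) ∂gam) - η^2/2 * d2| := by
        congr 1; ring
    _ ≤ (|d2|/2 + M) * M3 * η^3 := est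
    _ = (|d2|/2 + M) * M3 * η^3 := rfl

/-- For `R_η` Bernoulli with parameter `η`, `G` an independent standard Gaussian and
`B_η = R_η · ηG · 1_{|ηG| ≤ 1}`, one has
`E(φ(B_η)) = φ(0) + (η³/2) φ''(0) + o(η³)` as `η → 0⁺` for all smooth compactly
supported `φ`. -/
theorem stmt2 {Ω : Type*} [MeasurableSpace Ω] (μ : Measure Ω) [IsProbabilityMeasure μ]
    (R : ℝ → Ω → ℝ) (G : Ω → ℝ) (hG : Measurable G)
    (hlawG : μ.map G = ProbabilityTheory.gaussianReal 0 1)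
    (hR : ∀ η, Measurable (R η))
    (hlawR : ∀ η ∈ Set.Ioo (0:ℝ) 1,
      μ {ω | R η ω = 1} = ENNReal.ofReal η ∧ μ {ω | R η ω = 0} = ENNReal.ofReal (1 - η))
    (hrange : ∀ η ω, R η ω = 0 ∨ R η ω = 1)
    (hind : ∀ η, ProbabilityTheory.IndepFun (R η) G μ)
    (Bη : ℝ → Ω → ℝ)
    (hBη : ∀ η ω, Bη η ω = R η ω * (if |η * G ω| ≤ 1 then η * G ω else 0))
    (φ : ℝ → ℝ) (hφ : ContDiff ℝ (⊤ : ℕ∞) φ) (hφc : HasCompactSupport φ) :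
    (fun η => (∫ ω, φ (Bη η ω) ∂μ) - (φ 0 + η ^ 3 / 2 * deriv (deriv φ) 0))
      =o[𝓝[>] (0:ℝ)] fun η => η ^ 3 := by
  have hφ' : ContDiff ℝ ((⊤:ℕ∞):WithTop ℕ∞) φ := hφ.of_le (by simp)
  obtain ⟨C, hC0, hC⟩ := key hφ' hφc
  obtain ⟨K, hK⟩ := hφc.exists_bound_of_continuous hφ.continuous
  have hK0 : 0 ≤ K := le_trans (norm_nonneg _) (hK 0)
  -- the exact expression of the expectation for η ∈ (0,1)
  have hEq : ∀ η ∈ Set.Ioo (0:ℝ) 1, (∫ ω, φ (Bη η ω) ∂μ)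
      = φ 0 + η * ∫ x, (φ (if |η*x| ≤ 1 then η*x else 0) - φ 0) ∂gam := by
    rintro η ⟨hη0, hη1⟩
    set ψ : ℝ → ℝ := fun x => φ (if |η*x| ≤ 1 then η*x else 0) - φ 0 with hψdef
    have ht : Measurable fun x : ℝ => if |η*x| ≤ 1 then η*x else 0 := Measurable.ite
      (measurableSet_le (measurable_id.const_mul η).abs measurable_const)
      (measurable_id.const_mul η) measurable_const
    have hψ : Measurable ψ := (hφ.continuous.measurable.comp ht).sub measurable_const
    have hψb : ∀ x, |ψ x| ≤ 2 * K := by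
      intro x
      calc |ψ x| ≤ |φ (if |η*x| ≤ 1 then η*x else 0)| + |φ 0| := abs_sub _ _
        _ ≤ K + K := add_le_add (hK _) (hK 0)
        _ = 2 * K := by ring
    have hpt : ∀ ω, φ (Bη η ω) = φ 0 + R η ω * ψ (G ω) := by
      intro ω
      rcases hrange η ω with h|h
      · rw [hBη, h]; simp
      · rw [hBη, h]; simp [hψdef]
    have hint : Integrable (fun ω => R η ω * ψ (G ω)) μ := by
      refine Integrable.mono' (integrable_const (2*K))
        ((hR η).mul (hψ.comp hG)).aestronglyMeasurable
        (Filter.Eventually.of_forall fun ω => ?_)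
      rw [Real.norm_eq_abs, abs_mul]
      have h1 : |R η ω| ≤ 1 := by rcases hrange η ω with h|h <;> rw [h] <;> norm_num
      calc |R η ω| * |ψ (G ω)| ≤ 1 * (2*K) :=
            mul_le_mul h1 (hψb _) (abs_nonneg _) zero_le_one
        _ = 2*K := one_mul _
    have h1 : (∫ ω, φ (Bη η ω) ∂μ) = φ 0 + ∫ ω, R η ω * ψ (G ω) ∂μ := by
      rw [show (fun ω => φ (Bη η ω)) = fun ω => φ 0 + R η ω * ψ (G ω) from funext hpt]
      rw [integral_add (integrable_const _) hint, integral_const]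
      simp
    -- independence
    have hindψ : IndepFun (R η) (ψ ∘ G) μ := (hind η).comp measurable_id hψ
    have h2 : (∫ ω, R η ω * ψ (G ω) ∂μ) = (∫ ω, R η ω ∂μ) * ∫ ω, ψ (G ω) ∂μ := by
      rw [show (fun ω => R η ω * ψ (G ω)) = R η * (ψ ∘ G) from rfl]
      exact hindψ.integral_mul_eq_mul_integral (hR η).aestronglyMeasurable
        (hψ.comp hG).aestronglyMeasurable
    have h3 : (∫ ω, R η ω ∂μ) = η := by
      have hRind : R η = Set.indicator {ω | R η ω = 1} (fun _ => (1:ℝ)) := by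
        funext ω
        rcases hrange η ω with h|h <;> simp [Set.indicator_apply, h] <;> norm_num
      have hs : MeasurableSet {ω | R η ω = 1} := (hR η) (measurableSet_singleton 1)
      rw [hRind]
      rw [show (Set.indicator {ω | R η ω = 1} (fun _ => (1:ℝ)))
        = Set.indicator {ω | R η ω = 1} (1 : Ω → ℝ) from rfl]
      rw [MeasureTheory.integral_indicator_one hs, measureReal_def, (hlawR η ⟨hη0, hη1⟩).1,
        ENNReal.toReal_ofReal hη0.le]
    have h4 : (∫ ω, ψ (G ω) ∂μ) = ∫ x, ψ x ∂gam := by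
      rw [show gam = gaussianReal 0 1 from rfl, ← hlawG,
        integral_map hG.aemeasurable hψ.aestronglyMeasurable]
    rw [h1, h2, h3, h4]
  -- conclude
  rw [Asymptotics.isLittleO_iff]
  intro ε hε
  have hmem : Set.Ioo (0:ℝ) (min 1 (ε/(C+1))) ∈ 𝓝[>] (0:ℝ) :=
    Ioo_mem_nhdsGT_of_mem ⟨le_refl 0, by positivity⟩
  filter_upwards [hmem] with η hη
  obtain ⟨hη0, hηlt⟩ := hη
  have hη1 : η < 1 := lt_of_lt_of_le hηlt (min_le_left _ _)
  have hη2 : η < ε/(C+1) := lt_of_lt_of_le hηlt (min_le_right _ _)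
  have hηIoo : η ∈ Set.Ioo (0:ℝ) 1 := ⟨hη0, hη1⟩
  rw [hEq η hηIoo]
  have hb := hC η hηIoo
  rw [Real.norm_eq_abs, Real.norm_eq_abs]
  have heq : φ 0 + η * (∫ x, (φ (if |η*x| ≤ 1 then η*x else 0) - φ 0) ∂gam)
      - (φ 0 + η ^ 3 / 2 * deriv (deriv φ) 0)
      = η * ((∫ x, (φ (if |η*x| ≤ 1 then η*x else 0) - φ 0) ∂gam)
          - η^2/2 * deriv (deriv φ) 0) := by ring
  rw [heq, abs_mul, abs_of_pos hη0, abs_pow, abs_of_pos hη0]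
  calc η * |(∫ x, (φ (if |η*x| ≤ 1 then η*x else 0) - φ 0) ∂gam)
        - η^2/2 * deriv (deriv φ) 0|
      ≤ η * (C * η^3) := by apply mul_le_mul_of_nonneg_left hb hη0.le
    _ = (C * η) * η^3 := by ring
    _ ≤ ε * η^3 := by
        apply mul_le_mul_of_nonneg_right _ (by positivity)
        have h5 : C * η ≤ (C+1) * η := by nlinarith
        have h6 : (C+1) * η < ε := by
          rw [← lt_div_iff₀' (by positivity)] at *
          · exact hη2
        linarith
end

section
/- Let R_η be Bernoulli with parameter η and U uniform on [0,1], independent. Set B_η = R_η − ηU. Then for every smooth compactly supported φ, E(φ(B_η)) = φ(0) + η(−E(U)φ'(0) + φ(1) − φ(0)) + η²(−E(U)(φ'(1) − φ'(0)) + (1/2)E(U²)φ''(0)) + o(η²) as η → 0⁺. -/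
set_option maxHeartbeats 1000000

open MeasureTheory Asymptotics Topology ProbabilityTheory

lemma lipOfBound {f : ℝ → ℝ} (hf : Differentiable ℝ f) {M : ℝ}
    (hM : ∀ x, |deriv f x| ≤ M) (s t : ℝ) : |f s - f t| ≤ M * |s - t| := by
  have := Convex.norm_image_sub_le_of_norm_deriv_le (f := f) (s := Set.univ)
    (fun x _ => hf x) (fun x _ => hM x) convex_univ (Set.mem_univ t) (Set.mem_univ s)
  simpa using this

lemma absLeOfUIcc {h t : ℝ} (ht : t ∈ Set.uIcc 0 h) : |t| ≤ |h| := by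
  rcases Set.mem_uIcc.1 ht with ⟨h1, h2⟩ | ⟨h1, h2⟩ <;>
    exact abs_le.2 ⟨by simp only [neg_le]; nlinarith [le_abs_self h, neg_abs_le h],
      by nlinarith [le_abs_self h, neg_abs_le h]⟩

lemma mvtZero {g : ℝ → ℝ} {g' : ℝ → ℝ} (hg : ∀ t, HasDerivAt g (g' t) t)
    (h C : ℝ) (hb : ∀ t ∈ Set.uIcc 0 h, |g' t| ≤ C) (hg0 : g 0 = 0) :
    |g h| ≤ C * |h| := by
  have hb' : ∀ x ∈ Set.uIcc 0 h, ‖deriv g x‖ ≤ C := by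
    intro x hx; rw [(hg x).deriv]; simpa using hb x hx
  have := Convex.norm_image_sub_le_of_norm_deriv_le (f := g) (s := Set.uIcc 0 h)
    (fun x _ => (hg x).differentiableAt) hb' (convex_uIcc 0 h)
    Set.left_mem_uIcc Set.right_mem_uIcc
  simpa [hg0] using this

lemma taylor1 {f : ℝ → ℝ} (hf : ContDiff ℝ (⊤ : ℕ∞) f) {M : ℝ}
    (hM : ∀ x, |deriv (deriv f) x| ≤ M) (a h : ℝ) :
    |f (a + h) - f a - h * deriv f a| ≤ M * h ^ 2 := by
  have hf1 : Differentiable ℝ f := hf.differentiable (by norm_num)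
  have hdf : ContDiff ℝ (⊤ : ℕ∞) (deriv f) := by
    have := hf.iterate_deriv 1
    simpa using this
  have hdf1 : Differentiable ℝ (deriv f) := hdf.differentiable (by norm_num)
  have hlip : ∀ s t : ℝ, |deriv f s - deriv f t| ≤ M * |s - t| := lipOfBound hdf1 hM
  set g : ℝ → ℝ := fun t => f (a + t) - f a - t * deriv f a with hgdef
  have hg : ∀ t, HasDerivAt g (deriv f (a + t) - deriv f a) t := by
    intro t
    have h1 : HasDerivAt (fun t : ℝ => f (a + t)) (deriv f (a + t)) t := by
      have := ((hf1 (a + t)).hasDerivAt).comp t ((hasDerivAt_id t).const_add a)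
      exact this.congr_deriv (mul_one _)
    have h2 := (h1.sub_const (f a)).sub ((hasDerivAt_id t).mul_const (deriv f a))
    exact h2.congr_deriv (by ring)
  have hM0 : 0 ≤ M := le_trans (abs_nonneg _) (hM 0)
  have hb : ∀ t ∈ Set.uIcc 0 h, |deriv f (a + t) - deriv f a| ≤ M * |h| := by
    intro t ht
    calc |deriv f (a + t) - deriv f a| ≤ M * |a + t - a| := hlip (a + t) a
      _ = M * |t| := by ring_nf
      _ ≤ M * |h| := mul_le_mul_of_nonneg_left (absLeOfUIcc ht) hM0
  have := mvtZero hg h (M * |h|) hb (by simp [g])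
  calc |g h| ≤ M * |h| * |h| := this
    _ = M * h ^ 2 := by rw [mul_assoc, ← abs_mul, ← sq, abs_sq]

lemma taylor2 {f : ℝ → ℝ} (hf : ContDiff ℝ (⊤ : ℕ∞) f) {M : ℝ}
    (hM : ∀ x, |deriv (deriv (deriv f)) x| ≤ M) (h : ℝ) :
    |f h - f 0 - h * deriv f 0 - h ^ 2 / 2 * deriv (deriv f) 0| ≤ M * |h| ^ 3 := by
  have hf1 : Differentiable ℝ f := hf.differentiable (by norm_num)
  have hdf : ContDiff ℝ (⊤ : ℕ∞) (deriv f) := by simpa using hf.iterate_deriv 1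
  have hM0 : 0 ≤ M := le_trans (abs_nonneg _) (hM 0)
  set c := deriv (deriv f) 0 with hc
  set g : ℝ → ℝ := fun t => f t - f 0 - t * deriv f 0 - t ^ 2 / 2 * c with hgdef
  have hg : ∀ t, HasDerivAt g (deriv f t - deriv f 0 - t * c) t := by
    intro t
    have h1 : HasDerivAt (fun t : ℝ => t ^ 2 / 2 * c) (2 * t ^ 1 / 2 * c) t :=
      ((hasDerivAt_pow 2 t).div_const 2).mul_const c
    have h2 := (((hf1 t).hasDerivAt.sub_const (f 0)).sub
      ((hasDerivAt_id t).mul_const (deriv f 0))).sub h1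
    have h3 : deriv f t - deriv f 0 - t * c = deriv f t - 1 * deriv f 0 - 2 * t ^ 1 / 2 * c := by
      ring
    rw [h3]
    exact h2.congr_deriv (by ring)
  have hb : ∀ t ∈ Set.uIcc 0 h, |deriv f t - deriv f 0 - t * c| ≤ M * |h| ^ 2 := by
    intro t ht
    have h0 := taylor1 hdf hM 0 t
    simp only [zero_add] at h0
    calc |deriv f t - deriv f 0 - t * c| ≤ M * t ^ 2 := h0
      _ ≤ M * |h| ^ 2 := by
          have h1 : |t| ≤ |h| := absLeOfUIcc ht
          have h2 : t ^ 2 ≤ |h| ^ 2 := by nlinarith [abs_nonneg t, le_abs_self t, neg_abs_le t]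
          exact mul_le_mul_of_nonneg_left h2 hM0
  have := mvtZero hg h (M * |h| ^ 2) hb (by simp [g])
  calc |g h| ≤ M * |h| ^ 2 * |h| := this
    _ = M * |h| ^ 3 := by ring

/-- For `R_η` Bernoulli with parameter `η` and `U` uniform on `[0,1]`, independent,
and `B_η = R_η − ηU`, one has, for every smooth compactly supported `φ`,
`E(φ(B_η)) = φ(0) + η(−E(U)φ'(0) + φ(1) − φ(0))
  + η²(−E(U)(φ'(1) − φ'(0)) + (1/2)E(U²)φ''(0)) + o(η²)` as `η → 0⁺`. -/
theorem stmt3 {Ω : Type*} [MeasurableSpace Ω] (μ : Measure Ω) [IsProbabilityMeasure μ]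
    (R : ℝ → Ω → ℝ) (U : Ω → ℝ) (hU : Measurable U)
    (hlawU : μ.map U = volume.restrict (Set.Icc (0:ℝ) 1))
    (hR : ∀ η, Measurable (R η))
    (hlawR : ∀ η ∈ Set.Ioo (0:ℝ) 1,
      μ {ω | R η ω = 1} = ENNReal.ofReal η ∧ μ {ω | R η ω = 0} = ENNReal.ofReal (1 - η))
    (hrange : ∀ η ω, R η ω = 0 ∨ R η ω = 1)
    (hind : ∀ η, ProbabilityTheory.IndepFun (R η) U μ)
    (Bη : ℝ → Ω → ℝ)
    (hBη : ∀ η ω, Bη η ω = R η ω - η * U ω)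
    (φ : ℝ → ℝ) (hφ : ContDiff ℝ (⊤ : ℕ∞) φ) (hφc : HasCompactSupport φ) :
    (fun η => (∫ ω, φ (Bη η ω) ∂μ) -
        (φ 0 + η * (-(∫ ω, U ω ∂μ) * deriv φ 0 + φ 1 - φ 0)
          + η ^ 2 * (-(∫ ω, U ω ∂μ) * (deriv φ 1 - deriv φ 0)
              + 1 / 2 * (∫ ω, (U ω) ^ 2 ∂μ) * deriv (deriv φ) 0)))
      =o[𝓝[>] (0:ℝ)] fun η => η ^ 2 := by
  classical
  have hφ' : ContDiff ℝ (⊤ : ℕ∞) φ := hφ.of_le (by simp)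
  have hd1 : ContDiff ℝ (⊤ : ℕ∞) (deriv φ) := by simpa using hφ'.iterate_deriv 1
  have hd2 : ContDiff ℝ (⊤ : ℕ∞) (deriv (deriv φ)) := by simpa using hd1.iterate_deriv 1
  have hd3 : ContDiff ℝ (⊤ : ℕ∞) (deriv (deriv (deriv φ))) := by simpa using hd2.iterate_deriv 1
  have hsupp2 : HasCompactSupport (deriv (deriv φ)) := hφc.deriv.deriv
  have hsupp3 : HasCompactSupport (deriv (deriv (deriv φ))) := hsupp2.deriv
  obtain ⟨M2, hM2⟩ : ∃ M, ∀ x, |deriv (deriv φ) x| ≤ M := by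
    simpa [Real.norm_eq_abs] using hsupp2.exists_bound_of_continuous hd2.continuous
  obtain ⟨M3, hM3⟩ : ∃ M, ∀ x, |deriv (deriv (deriv φ)) x| ≤ M := by
    simpa [Real.norm_eq_abs] using hsupp3.exists_bound_of_continuous hd3.continuous
  have hM2n : 0 ≤ M2 := le_trans (abs_nonneg _) (hM2 0)
  have hM3n : 0 ≤ M3 := le_trans (abs_nonneg _) (hM3 0)
  obtain ⟨Cb, hCb⟩ : ∃ C, ∀ x, |φ x| ≤ C := by
    simpa [Real.norm_eq_abs] using hφc.exists_bound_of_continuous hφ'.continuous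
  -- U lies in [0,1] almost surely
  have hUae : ∀ᵐ ω ∂μ, U ω ∈ Set.Icc (0:ℝ) 1 := by
    have hmeas : MeasurableSet (Set.Icc (0:ℝ) 1) := measurableSet_Icc
    have h0 : μ (U ⁻¹' (Set.Icc (0:ℝ) 1)ᶜ) = 0 := by
      rw [← Measure.map_apply hU hmeas.compl, hlawU, Measure.restrict_apply hmeas.compl]
      simp
    rw [ae_iff]
    exact h0
  have key_int : ∀ (g : Ω → ℝ), Measurable g → ∀ (f : ℝ → ℝ), Continuous f →
      (∃ Cf, ∀ x, |f x| ≤ Cf) → Integrable (fun ω => f (g ω)) μ := by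
    rintro g hg f hf ⟨Cf, hCf⟩
    exact (integrable_const Cf).mono' ((hf.measurable.comp hg).aestronglyMeasurable)
      (Filter.Eventually.of_forall fun ω => by simpa [Real.norm_eq_abs] using hCf (g ω))
  have hUint : Integrable U μ := (integrable_const (1:ℝ)).mono' hU.aestronglyMeasurable
    (hUae.mono fun ω h => by rw [Real.norm_eq_abs, abs_of_nonneg h.1]; exact h.2)
  have hU2int : Integrable (fun ω => (U ω) ^ 2) μ := (integrable_const (1:ℝ)).mono'
    ((hU.pow_const 2).aestronglyMeasurable)
    (hUae.mono fun ω h => by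
      rw [Real.norm_eq_abs, abs_of_nonneg (by positivity)]
      nlinarith [h.1, h.2])
  set EU := ∫ ω, U ω ∂μ with hEU
  set EU2 := ∫ ω, (U ω) ^ 2 ∂μ with hEU2
  set C : ℝ := M2 + M3 + |EU2 * deriv (deriv φ) 0 / 2| with hCdef
  have main : ∀ η ∈ Set.Ioo (0:ℝ) 1,
      |(∫ ω, φ (Bη η ω) ∂μ) - (φ 0 + η * (-EU * deriv φ 0 + φ 1 - φ 0)
        + η ^ 2 * (-EU * (deriv φ 1 - deriv φ 0) + 1 / 2 * EU2 * deriv (deriv φ) 0))|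
        ≤ C * η ^ 3 := by
    intro η hη
    obtain ⟨hη0, hη1⟩ := hη
    simp only [hBη]
    have hf0c : Continuous fun u : ℝ => φ (-(η * u)) :=
      hφ'.continuous.comp (continuous_const.mul continuous_id).neg
    have hf1c : Continuous fun u : ℝ => φ (1 - η * u) :=
      hφ'.continuous.comp (continuous_const.sub (continuous_const.mul continuous_id))
    have hBmeas : Measurable fun ω => R η ω - η * U ω := (hR η).sub (measurable_const.mul hU)
    set s : Set Ω := (R η) ⁻¹' {0} with hs_def
    have hs : MeasurableSet s := hR η (measurableSet_singleton 0)
    have hsc : sᶜ = (R η) ⁻¹' {1} := by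
      ext ω
      rcases hrange η ω with h | h <;> simp [hs_def, h]
    have hInt : Integrable (fun ω => φ (R η ω - η * U ω)) μ :=
      key_int _ hBmeas φ hφ'.continuous ⟨Cb, hCb⟩
    -- factorization via independence
    have hfac : ∀ (f : ℝ → ℝ), Continuous f → (∃ Cf, ∀ x, |f x| ≤ Cf) → ∀ c : ℝ,
        ∫ ω in (R η) ⁻¹' {c}, f (U ω) ∂μ
          = (μ ((R η) ⁻¹' {c})).toReal * ∫ ω, f (U ω) ∂μ := by
      intro f hf hbd c
      have hmc : MeasurableSet ({c} : Set ℝ) := measurableSet_singleton c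
      set X : Ω → ℝ := fun ω => Set.indicator {c} (fun _ => (1:ℝ)) (R η ω) with hX
      have hXi : X = Set.indicator ((R η) ⁻¹' {c}) fun _ => (1:ℝ) := by
        ext ω; by_cases h : R η ω = c <;> simp [hX, Set.indicator, h]
      have hXint : Integrable X μ := by
        rw [hXi]; exact (integrable_const (1:ℝ)).indicator (hR η hmc)
      have hYint : Integrable (fun ω => f (U ω)) μ := key_int U hU f hf hbd
      have hindXY : IndepFun X (fun ω => f (U ω)) μ :=
        (hind η).comp (measurable_one.indicator hmc) hf.measurable
      have hmul := hindXY.integral_mul_eq_mul_integral hXint.aestronglyMeasurable hYint.aestronglyMeasurable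
      have e1 : ∫ ω, X ω * f (U ω) ∂μ = ∫ ω in (R η) ⁻¹' {c}, f (U ω) ∂μ := by
        rw [← integral_indicator (hR η hmc)]
        congr 1
        ext ω
        rw [hXi]
        by_cases h : ω ∈ (R η) ⁻¹' {c} <;> simp [h]
      have e2 : ∫ ω, X ω ∂μ = (μ ((R η) ⁻¹' {c})).toReal := by
        rw [hXi, integral_indicator_const (1:ℝ) (hR η hmc)]
        simp [Measure.real]
      calc ∫ ω in (R η) ⁻¹' {c}, f (U ω) ∂μ = ∫ ω, X ω * f (U ω) ∂μ := e1.symm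
        _ = (∫ ω, X ω ∂μ) * ∫ ω, f (U ω) ∂μ := hmul
        _ = (μ ((R η) ⁻¹' {c})).toReal * ∫ ω, f (U ω) ∂μ := by rw [e2]
    have hμlaw := hlawR η ⟨hη0, hη1⟩
    have hμ1 : (μ ((R η) ⁻¹' {1})).toReal = η := by
      have : μ ((R η) ⁻¹' {1}) = ENNReal.ofReal η := hμlaw.1
      rw [this, ENNReal.toReal_ofReal hη0.le]
    have hμ0 : (μ ((R η) ⁻¹' {0})).toReal = 1 - η := by
      have : μ ((R η) ⁻¹' {0}) = ENNReal.ofReal (1 - η) := hμlaw.2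
      rw [this, ENNReal.toReal_ofReal (by linarith)]
    set I0 := ∫ ω, φ (-(η * U ω)) ∂μ with hI0
    set I1 := ∫ ω, φ (1 - η * U ω) ∂μ with hI1
    have split : ∫ ω, φ (R η ω - η * U ω) ∂μ = (1 - η) * I0 + η * I1 := by
      have h1 : ∫ ω in s, φ (R η ω - η * U ω) ∂μ = ∫ ω in s, φ (-(η * U ω)) ∂μ := by
        refine setIntegral_congr_fun hs fun ω hω => ?_
        have h0 : R η ω = 0 := hω
        rw [h0, zero_sub]
      have h2 : ∫ ω in sᶜ, φ (R η ω - η * U ω) ∂μ = ∫ ω in sᶜ, φ (1 - η * U ω) ∂μ := by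
        refine setIntegral_congr_fun hs.compl fun ω hω => ?_
        rw [hsc] at hω
        have h0 : R η ω = 1 := hω
        rw [h0]
      rw [← integral_add_compl hs hInt, h1, h2, hsc,
        hfac _ hf0c ⟨Cb, fun x => hCb _⟩ 0, hfac _ hf1c ⟨Cb, fun x => hCb _⟩ 1, hμ0, hμ1]
    -- second order Taylor for I0
    have hB : |I0 - (φ 0 - η * EU * deriv φ 0 + η ^ 2 / 2 * EU2 * deriv (deriv φ) 0)|
        ≤ M3 * η ^ 3 := by
      have hintf : Integrable (fun ω => φ (-(η * U ω))) μ :=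
        key_int U hU (fun u => φ (-(η * u))) hf0c ⟨Cb, fun x => hCb _⟩
      have hrepr : I0 - (φ 0 - η * EU * deriv φ 0 + η ^ 2 / 2 * EU2 * deriv (deriv φ) 0)
          = ∫ ω, (φ (-(η * U ω)) - (φ 0 + (-(η * deriv φ 0)) * U ω
              + (η ^ 2 / 2 * deriv (deriv φ) 0) * (U ω) ^ 2)) ∂μ := by
        have q1 : Integrable (fun ω => φ 0 + -(η * deriv φ 0) * U ω) μ :=
          (integrable_const _).add (hUint.const_mul _)
        have q2 : Integrable (fun ω => (φ 0 + -(η * deriv φ 0) * U ω)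
            + η ^ 2 / 2 * deriv (deriv φ) 0 * (U ω) ^ 2) μ := q1.add (hU2int.const_mul _)
        rw [integral_sub hintf q2, integral_add q1 (hU2int.const_mul _),
          integral_add (integrable_const _) (hUint.const_mul _),
          integral_const, integral_const_mul _ _, integral_const_mul _ _]
        simp only [measure_univ, probReal_univ, ENNReal.toReal_one, smul_eq_mul, one_mul]
        rw [← hEU, ← hEU2]
        ring
      rw [hrepr]
      have hpt : ∀ᵐ ω ∂μ, ‖φ (-(η * U ω)) - (φ 0 + (-(η * deriv φ 0)) * U ω
          + (η ^ 2 / 2 * deriv (deriv φ) 0) * (U ω) ^ 2)‖ ≤ M3 * η ^ 3 := by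
        filter_upwards [hUae] with ω hω
        have ht := taylor2 hφ' hM3 (-(η * U ω))
        have habs : |(-(η * U ω))| ≤ η := by
          rw [abs_neg, abs_of_nonneg (mul_nonneg hη0.le hω.1)]
          nlinarith [hω.2]
        have h3 : |(-(η * U ω))| ^ 3 ≤ η ^ 3 := pow_le_pow_left₀ (abs_nonneg _) habs 3
        have hb : |φ (-(η * U ω)) - φ 0 - (-(η * U ω)) * deriv φ 0
            - (-(η * U ω)) ^ 2 / 2 * deriv (deriv φ) 0| ≤ M3 * η ^ 3 :=
          le_trans ht (by nlinarith)
        rw [Real.norm_eq_abs]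
        convert hb using 2
        ring
      have := norm_integral_le_of_norm_le (integrable_const (M3 * η ^ 3)) hpt
      simpa [Real.norm_eq_abs, measure_univ] using this
    -- first order Taylor for I1
    have hA : |I1 - (φ 1 - η * EU * deriv φ 1)| ≤ M2 * η ^ 2 := by
      have hintf : Integrable (fun ω => φ (1 - η * U ω)) μ :=
        key_int U hU (fun u => φ (1 - η * u)) hf1c ⟨Cb, fun x => hCb _⟩
      have hrepr : I1 - (φ 1 - η * EU * deriv φ 1)
          = ∫ ω, (φ (1 - η * U ω) - (φ 1 + (-(η * deriv φ 1)) * U ω)) ∂μ := by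
        have q1 : Integrable (fun ω => φ 1 + -(η * deriv φ 1) * U ω) μ :=
          (integrable_const _).add (hUint.const_mul _)
        rw [integral_sub hintf q1,
          integral_add (integrable_const _) (hUint.const_mul _),
          integral_const, integral_const_mul _ _]
        simp only [measure_univ, probReal_univ, ENNReal.toReal_one, smul_eq_mul, one_mul]
        rw [← hEU]
        ring
      rw [hrepr]
      have hpt : ∀ᵐ ω ∂μ, ‖φ (1 - η * U ω) - (φ 1 + (-(η * deriv φ 1)) * U ω)‖
          ≤ M2 * η ^ 2 := by
        filter_upwards [hUae] with ω hω
        have ht := taylor1 hφ' hM2 1 (-(η * U ω))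
        have hU2le : (U ω) ^ 2 ≤ 1 := by nlinarith [hω.1, hω.2]
        have h2 : (-(η * U ω)) ^ 2 ≤ η ^ 2 := by
          nlinarith [mul_nonneg (sq_nonneg η) (sub_nonneg.2 hU2le)]
        have hb : |φ (1 + -(η * U ω)) - φ 1 - (-(η * U ω)) * deriv φ 1| ≤ M2 * η ^ 2 :=
          le_trans ht (by nlinarith)
        rw [Real.norm_eq_abs]
        convert hb using 2
        ring_nf
      have := norm_integral_le_of_norm_le (integrable_const (M2 * η ^ 2)) hpt
      simpa [Real.norm_eq_abs, measure_univ] using this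
    set A := I1 - (φ 1 - η * EU * deriv φ 1) with hAdef
    set B := I0 - (φ 0 - η * EU * deriv φ 0 + η ^ 2 / 2 * EU2 * deriv (deriv φ) 0) with hBdef
    set D := EU2 * deriv (deriv φ) 0 / 2 with hDdef
    have halg : (∫ ω, φ (R η ω - η * U ω) ∂μ) - (φ 0 + η * (-EU * deriv φ 0 + φ 1 - φ 0)
        + η ^ 2 * (-EU * (deriv φ 1 - deriv φ 0) + 1 / 2 * EU2 * deriv (deriv φ) 0))
        = η * A + (1 - η) * B - η ^ 3 * D := by
      rw [split, hAdef, hBdef, hDdef]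
      ring
    rw [halg]
    have step1 : |η * A + (1 - η) * B - η ^ 3 * D|
        ≤ |η * A| + |(1 - η) * B| + |η ^ 3 * D| := by
      calc |η * A + (1 - η) * B - η ^ 3 * D| ≤ |η * A + (1 - η) * B| + |η ^ 3 * D| :=
            abs_sub _ _
        _ ≤ |η * A| + |(1 - η) * B| + |η ^ 3 * D| := by
            have := abs_add_le (η * A) ((1 - η) * B)
            linarith
    have e1 : |η * A| ≤ η * (M2 * η ^ 2) := by
      rw [abs_mul, abs_of_pos hη0]
      exact mul_le_mul_of_nonneg_left hA hη0.le
    have e2 : |(1 - η) * B| ≤ M3 * η ^ 3 := by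
      rw [abs_mul, abs_of_pos (by linarith : (0:ℝ) < 1 - η)]
      calc (1 - η) * |B| ≤ 1 * |B| := by
            apply mul_le_mul_of_nonneg_right (by linarith) (abs_nonneg _)
        _ ≤ M3 * η ^ 3 := by rw [one_mul]; exact hB
    have e3 : |η ^ 3 * D| = η ^ 3 * |D| := by
      rw [abs_mul, abs_of_pos (by positivity)]
    calc |η * A + (1 - η) * B - η ^ 3 * D| ≤ |η * A| + |(1 - η) * B| + |η ^ 3 * D| := step1
      _ ≤ η * (M2 * η ^ 2) + M3 * η ^ 3 + η ^ 3 * |D| := by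
          rw [e3]; linarith
      _ = C * η ^ 3 := by rw [hCdef, hDdef]; ring
  -- conclude littleO
  have h3 : (fun η : ℝ => η ^ 3) =o[𝓝[>] (0:ℝ)] fun η => η ^ 2 :=
    (Asymptotics.isLittleO_pow_pow (by norm_num)).mono nhdsWithin_le_nhds
  refine IsBigO.trans_isLittleO ?_ h3
  rw [isBigO_iff]
  refine ⟨C, ?_⟩
  filter_upwards [Ioo_mem_nhdsGT_of_mem (by simp : (0:ℝ) ∈ Set.Ico (0:ℝ) 1)] with η hη
  have hm := main η hη
  rw [Real.norm_eq_abs, Real.norm_eq_abs, abs_of_pos (pow_pos hη.1 3)]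
  exact hm
end

section
/- Suppose B_η are random variables bounded uniformly in L^∞(Ω), with ‖B_η‖_{L^p(Ω)} → 0 for some p > 1, and B_η/‖B_η‖_{L^p(Ω)} converging weakly in L^p(Ω) to B̄_0 with E(B̄_0) ≠ 0. Then E(|B_η|^p) = o(E(B_η)) as η → 0⁺. -/
open MeasureTheory Asymptotics Topology

/-- If `B_η` are uniformly bounded in `L^∞`, `‖B_η‖_{L^p} → 0` for some `p > 1`, and
`B_η/‖B_η‖_{L^p}` converges weakly in `L^p` to `B̄₀` with `E(B̄₀) ≠ 0`, then
`E(|B_η|^p) = o(E(B_η))` as `η → 0⁺`. -/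
theorem stmt4 {Ω : Type*} [MeasurableSpace Ω] (μ : Measure Ω) [IsProbabilityMeasure μ]
    (p : ℝ) (hp : 1 < p) (M : ℝ)
    (B : ℝ → Ω → ℝ) (hmeas : ∀ η, Measurable (B η))
    (hbdd : ∀ η > (0:ℝ), ∀ ω, |B η ω| ≤ M)
    (n : ℝ → ℝ)
    (hn : ∀ η, n η = (eLpNorm (B η) (ENNReal.ofReal p) μ).toReal)
    (hn0 : Filter.Tendsto n (𝓝[>] (0:ℝ)) (𝓝 0))
    (B0 : Ω → ℝ) (hB0 : MeasureTheory.MemLp B0 (ENNReal.ofReal p) μ)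
    (hweak : ∀ g : Ω → ℝ, MeasureTheory.MemLp g (ENNReal.ofReal (p / (p - 1))) μ →
      Filter.Tendsto (fun η => ∫ ω, (B η ω / n η) * g ω ∂μ) (𝓝[>] (0:ℝ))
        (𝓝 (∫ ω, B0 ω * g ω ∂μ)))
    (hmean : (∫ ω, B0 ω ∂μ) ≠ 0) :
    (fun η => ∫ ω, |B η ω| ^ p ∂μ) =o[𝓝[>] (0:ℝ)] fun η => ∫ ω, B η ω ∂μ := by
  have hp0 : (0:ℝ) < p := lt_trans one_pos hp
  set c := ∫ ω, B0 ω ∂μ with hc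
  -- test against the constant function 1
  have h1 : MemLp (fun _ : Ω => (1:ℝ)) (ENNReal.ofReal (p / (p - 1))) μ := memLp_const 1
  have hr := hweak _ h1
  simp only [mul_one] at hr
  have hr' : Filter.Tendsto (fun η => (∫ ω, B η ω ∂μ) / n η) (𝓝[>] (0:ℝ)) (𝓝 c) := by
    simpa [integral_div] using hr
  -- MemLp of B η for η > 0
  have hmem : ∀ η, 0 < η → MemLp (B η) (ENNReal.ofReal p) μ := fun η hη =>
    (memLp_top_of_bound (hmeas η).aestronglyMeasurable M
      (Filter.Eventually.of_forall fun ω => by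
        simpa [Real.norm_eq_abs] using hbdd η hη ω)).mono_exponent le_top
  -- key identity: ∫ |B η|^p = n η ^ p
  have hkey : ∀ η, 0 < η → ∫ ω, |B η ω| ^ p ∂μ = n η ^ p := by
    intro η hη
    have hint : (0:ℝ) ≤ ∫ ω, ‖B η ω‖ ^ p ∂μ :=
      integral_nonneg fun ω => Real.rpow_nonneg (norm_nonneg _) _
    have h := (hmem η hη).eLpNorm_eq_integral_rpow_norm
      (by simp [ENNReal.ofReal_eq_zero, not_le, hp0]) ENNReal.ofReal_ne_top
    rw [ENNReal.toReal_ofReal hp0.le] at h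
    have hnval : n η = (∫ ω, ‖B η ω‖ ^ p ∂μ) ^ p⁻¹ := by
      rw [hn η, h, ENNReal.toReal_ofReal (Real.rpow_nonneg hint _)]
    rw [hnval, ← Real.rpow_mul hint, inv_mul_cancel₀ hp0.ne', Real.rpow_one]
    simp [Real.norm_eq_abs]
  have habs : (0:ℝ) < |c| / 2 := by positivity
  -- eventual lower bound on |∫ B η| / n η
  have hA : ∀ᶠ η in 𝓝[>] (0:ℝ), |c| / 2 < |(∫ ω, B η ω ∂μ) / n η| :=
    hr'.abs.eventually_const_lt (half_lt_self (abs_pos.2 hmean))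
  have hnn : ∀ η, 0 ≤ n η := fun η => by rw [hn η]; exact ENNReal.toReal_nonneg
  rw [Asymptotics.isLittleO_iff]
  intro ε hε
  -- n η ^ (p-1) → 0
  have hpow : Filter.Tendsto (fun η => n η ^ (p - 1)) (𝓝[>] (0:ℝ)) (𝓝 0) := by
    have h := hn0.rpow_const (Or.inr (by linarith : (0:ℝ) ≤ p - 1))
    simpa [Real.zero_rpow (ne_of_gt (by linarith : (0:ℝ) < p - 1))] using h
  have hB : ∀ᶠ η in 𝓝[>] (0:ℝ), n η ^ (p - 1) < ε * (|c| / 2) :=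
    hpow.eventually_lt_const (by positivity)
  filter_upwards [self_mem_nhdsWithin, hA, hB] with η hη hAη hBη
  have hη' : (0:ℝ) < η := hη
  have hne : n η ≠ 0 := by
    intro h0
    rw [h0, div_zero, abs_zero] at hAη
    exact absurd hAη (not_lt.2 habs.le)
  have hnpos : 0 < n η := lt_of_le_of_ne (hnn η) (Ne.symm hne)
  have hInt : (∫ ω, B η ω ∂μ) = ((∫ ω, B η ω ∂μ) / n η) * n η := by
    field_simp
  have hlow : |c| / 2 * n η ≤ ‖∫ ω, B η ω ∂μ‖ := by
    rw [Real.norm_eq_abs, hInt, abs_mul, abs_of_pos hnpos]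
    exact mul_le_mul_of_nonneg_right hAη.le hnpos.le
  have hsplit : n η ^ p = n η ^ (p - 1) * n η := by
    have h := Real.rpow_add hnpos (p - 1) 1
    rw [sub_add_cancel, Real.rpow_one] at h
    exact h
  rw [Real.norm_eq_abs, hkey η hη', abs_of_nonneg (Real.rpow_nonneg (hnn η) p), hsplit]
  calc n η ^ (p - 1) * n η ≤ ε * (|c| / 2) * n η :=
        mul_le_mul_of_nonneg_right hBη.le hnpos.le
    _ = ε * (|c| / 2 * n η) := by ring
    _ ≤ ε * ‖∫ ω, B η ω ∂μ‖ := mul_le_mul_of_nonneg_left hlow hε.le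
end

section
/- Let B_η be uniformly bounded random variables with B_η = ηB̄_0 + η²R̄_0 + o(η²) weakly in L²(Ω) and such that B_η/η → B̄_0 strongly in L²(Ω). If the image measures dP_η of B_η admit an expansion dP_η = δ_0 + η dP̄_1 + η² dP̄_2 + o(η²) in compactly supported distributions, then necessarily dP̄_1 = −E(B̄_0)δ_0' and dP̄_2 = (1/2)E(B̄_0²)δ_0'' − E(R̄_0)δ_0'. -/
open MeasureTheory Asymptotics Topology Filter

section Aux

lemma stmt17_unique {c d : ℝ}
    (h : (fun η : ℝ => c * η + d * η ^ 2) =o[𝓝[>] (0:ℝ)] fun η => η ^ 2) :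
    c = 0 ∧ d = 0 := by
  have hid : Tendsto (fun η : ℝ => η) (𝓝[>] (0:ℝ)) (𝓝 0) :=
    tendsto_id.mono_right nhdsWithin_le_nhds
  have hpos : ∀ᶠ η in 𝓝[>] (0:ℝ), (0:ℝ) < η := self_mem_nhdsWithin
  have ht := h.tendsto_div_nhds_zero
  have hc : Tendsto (fun η : ℝ => c + d * η) (𝓝[>] (0:ℝ)) (𝓝 0) := by
    have h2 := hid.mul ht
    rw [mul_zero] at h2
    refine h2.congr' ?_
    filter_upwards [hpos] with η hη
    have hne : η ≠ 0 := ne_of_gt hη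
    field_simp
  have hc' : Tendsto (fun η : ℝ => c + d * η) (𝓝[>] (0:ℝ)) (𝓝 c) := by
    have : Tendsto (fun η : ℝ => c + d * η) (𝓝 (0:ℝ)) (𝓝 (c + d * 0)) :=
      (continuous_const.add (continuous_const.mul continuous_id)).tendsto 0
    simpa using this.mono_left nhdsWithin_le_nhds
  have hc0 : c = 0 := tendsto_nhds_unique hc' hc
  subst hc0
  have hd : Tendsto (fun _ : ℝ => d) (𝓝[>] (0:ℝ)) (𝓝 0) := by
    refine ht.congr' ?_
    filter_upwards [hpos] with η hη
    have hne : η ≠ 0 := ne_of_gt hη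
    field_simp
    ring
  exact ⟨rfl, tendsto_nhds_unique tendsto_const_nhds hd⟩

lemma stmt17_taylor {φ : ℝ → ℝ} (hφ : ContDiff ℝ (⊤ : ℕ∞) φ) {ε : ℝ} (hε : 0 < ε) :
    ∃ δ > 0, ∀ x : ℝ, |x| ≤ δ →
      |φ x - φ 0 - deriv φ 0 * x - deriv (deriv φ) 0 / 2 * x ^ 2| ≤ ε * x ^ 2 := by
  set c1 := deriv φ 0 with hc1
  set c2 := deriv (deriv φ) 0 with hc2
  have hphiI : ContDiff ℝ ((⊤:ℕ∞) : WithTop ℕ∞) φ := hφ.of_le (by simp)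
  have hd : Differentiable ℝ φ := hphiI.differentiable (by simp)
  have hφ' : ContDiff ℝ ((⊤:ℕ∞) : WithTop ℕ∞) (deriv φ) := (contDiff_infty_iff_deriv.mp hphiI).2
  have hd' : Differentiable ℝ (deriv φ) := hφ'.differentiable (by simp)
  have hcont'' : Continuous (deriv (deriv φ)) := (contDiff_infty_iff_deriv.mp hφ').2.continuous
  set ρ : ℝ → ℝ := fun x => φ x - φ 0 - c1 * x - c2 / 2 * x ^ 2 with hρ
  set ρ' : ℝ → ℝ := fun x => deriv φ x - c1 - c2 * x with hρ'def
  have hρ'at : ∀ x, HasDerivAt ρ (ρ' x) x := by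
    intro x
    have h1 : HasDerivAt φ (deriv φ x) x := (hd x).hasDerivAt
    have h2 : HasDerivAt (fun y : ℝ => c1 * y) c1 x := by
      simpa using (hasDerivAt_id x).const_mul c1
    have h3 : HasDerivAt (fun y : ℝ => c2 / 2 * y ^ 2) (c2 / 2 * (2 * x)) x := by
      simpa using (hasDerivAt_pow 2 x).const_mul (c2 / 2)
    have := ((h1.sub_const (φ 0)).sub h2).sub h3
    refine this.congr_deriv ?_
    show deriv φ x - c1 - c2 / 2 * (2 * x) = deriv φ x - c1 - c2 * x; ring
  have hρ''at : ∀ x, HasDerivAt ρ' (deriv (deriv φ) x - c2) x := by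
    intro x
    have h1 : HasDerivAt (deriv φ) (deriv (deriv φ) x) x := (hd' x).hasDerivAt
    have h2 : HasDerivAt (fun y : ℝ => c2 * y) c2 x := by
      simpa using (hasDerivAt_id x).const_mul c2
    have := (h1.sub_const c1).sub h2
    exact this
  obtain ⟨δ, hδpos, hδ⟩ := Metric.continuousAt_iff.mp hcont''.continuousAt ε hε
  refine ⟨δ / 2, by positivity, ?_⟩
  intro x hx
  have hρ0 : ρ 0 = 0 := by simp [hρ]
  have hρ'0 : ρ' 0 = 0 := by simp [hρ'def, hc1]
  set s : Set ℝ := Set.Icc (-|x|) |x| with hs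
  have h0s : (0:ℝ) ∈ s := by
    constructor <;> simp [abs_nonneg, neg_nonpos]
  have hxs : x ∈ s := by
    constructor
    · exact neg_abs_le x
    · exact le_abs_self x
  have hbound2 : ∀ t ∈ s, ‖deriv (deriv φ) t - c2‖ ≤ ε := by
    intro t ht
    have htabs : |t| ≤ |x| := abs_le.mpr ⟨ht.1, ht.2⟩
    have : dist t 0 < δ := by
      rw [Real.dist_eq, sub_zero]
      calc |t| ≤ |x| := htabs
        _ ≤ δ / 2 := hx
        _ < δ := by linarith
    have := hδ this
    rw [Real.dist_eq, ← hc2] at this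
    exact le_of_lt (by simpa [Real.norm_eq_abs] using this)
  have hbound1 : ∀ t ∈ s, ‖ρ' t‖ ≤ ε * |x| := by
    intro t ht
    have := Convex.norm_image_sub_le_of_norm_hasDerivWithin_le
      (f := ρ') (f' := fun t => deriv (deriv φ) t - c2) (s := s)
      (fun u hu => (hρ''at u).hasDerivWithinAt) hbound2 (convex_Icc _ _) h0s ht
    rw [hρ'0, sub_zero, sub_zero] at this
    calc ‖ρ' t‖ ≤ ε * ‖t‖ := this
      _ ≤ ε * |x| := by
        have : ‖t‖ ≤ |x| := by rw [Real.norm_eq_abs]; exact abs_le.mpr ⟨ht.1, ht.2⟩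
        exact mul_le_mul_of_nonneg_left this hε.le
  have := Convex.norm_image_sub_le_of_norm_hasDerivWithin_le
    (f := ρ) (f' := ρ') (s := s)
    (fun u hu => (hρ'at u).hasDerivWithinAt) hbound1 (convex_Icc _ _) h0s hxs
  rw [hρ0, sub_zero, sub_zero] at this
  calc |ρ x| = ‖ρ x‖ := (Real.norm_eq_abs _).symm
    _ ≤ ε * |x| * ‖x‖ := this
    _ = ε * x ^ 2 := by rw [Real.norm_eq_abs]; rw [pow_two, ← abs_mul_abs_self x]; ring

lemma stmt17_tail {Ω : Type*} [MeasurableSpace Ω] (μ : Measure Ω) [IsProbabilityMeasure μ]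
    (B0 : Ω → ℝ) (hB0 : MeasureTheory.MemLp B0 2 μ) {ε : ℝ} (hε : 0 < ε) :
    ∃ K : ℝ, 0 < K ∧ ∫ ω, (B0 ω ^ 2 - min (B0 ω ^ 2) K) ∂μ ≤ ε := by
  have hsqI : Integrable (fun ω => B0 ω ^ 2) μ := hB0.integrable_sq
  have hFm : ∀ K : ℝ, AEStronglyMeasurable (fun ω => B0 ω ^ 2 - min (B0 ω ^ 2) K) μ := by
    intro K
    have hcont : Continuous (fun x : ℝ => x ^ 2 - min (x ^ 2) K) :=
      (continuous_pow 2).sub ((continuous_pow 2).min continuous_const)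
    exact hcont.comp_aestronglyMeasurable hB0.aestronglyMeasurable
  have hTend : Tendsto (fun n : ℕ => ∫ ω, (B0 ω ^ 2 - min (B0 ω ^ 2) (n : ℝ)) ∂μ)
      atTop (𝓝 0) := by
    have := tendsto_integral_of_dominated_convergence (μ := μ)
      (F := fun n : ℕ => fun ω => B0 ω ^ 2 - min (B0 ω ^ 2) (n : ℝ))
      (f := fun _ => (0 : ℝ)) (bound := fun ω => B0 ω ^ 2)
      (fun n => hFm n) hsqI
      (fun n => Filter.Eventually.of_forall fun ω => ?_)
      (Filter.Eventually.of_forall fun ω => ?_)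
    · simpa using this
    · have h1 : min (B0 ω ^ 2) (n : ℝ) ≤ B0 ω ^ 2 := min_le_left _ _
      have h2 : 0 ≤ min (B0 ω ^ 2) (n : ℝ) := le_min (sq_nonneg _) (Nat.cast_nonneg n)
      show ‖B0 ω ^ 2 - min (B0 ω ^ 2) (n : ℝ)‖ ≤ B0 ω ^ 2
      rw [Real.norm_eq_abs, abs_of_nonneg (by linarith)]
      linarith
    · refine Tendsto.congr' ?_ tendsto_const_nhds
      filter_upwards [eventually_ge_atTop ⌈B0 ω ^ 2⌉₊] with n hn
      have : B0 ω ^ 2 ≤ (n : ℝ) := le_trans (Nat.le_ceil _) (Nat.cast_le.mpr hn)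
      simp [min_eq_left this]
  have : ∀ᶠ n : ℕ in atTop, ∫ ω, (B0 ω ^ 2 - min (B0 ω ^ 2) (n : ℝ)) ∂μ < ε :=
    hTend.eventually (gt_mem_nhds hε)
  obtain ⟨n, hn⟩ := ((this.and (eventually_ge_atTop 1)).exists)
  exact ⟨(n : ℝ), by exact_mod_cast hn.2, le_of_lt hn.1⟩

end Aux

set_option maxHeartbeats 1000000 in
/-- Lemma 20: if `B_η = η B̄₀ + η² R̄₀ + o(η²)` weakly in `L²(Ω)`, `B_η/η → B̄₀`
strongly in `L²(Ω)`, and the laws of `B_η` expand as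
`dP_η = δ₀ + η dP̄₁ + η² dP̄₂ + o(η²)`, then necessarily `dP̄₁ = −E(B̄₀) δ₀'` and
`dP̄₂ = (1/2) E(B̄₀²) δ₀'' − E(R̄₀) δ₀'` (in terms of actions:
`⟨dP̄₁, φ⟩ = E(B̄₀) φ'(0)` and `⟨dP̄₂, φ⟩ = (1/2)E(B̄₀²) φ''(0) + E(R̄₀) φ'(0)`). -/
theorem stmt17 {Ω : Type*} [MeasurableSpace Ω] (μ : Measure Ω) [IsProbabilityMeasure μ]
    (M : ℝ) (B : ℝ → Ω → ℝ)
    (hbdd : ∀ η > (0:ℝ), ∀ ω, |B η ω| ≤ M)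
    (B0 R0 : Ω → ℝ) (hB0 : MeasureTheory.MemLp B0 2 μ)
    (hR0 : MeasureTheory.MemLp R0 2 μ)
    (hweak : ∀ g : Ω → ℝ, MeasureTheory.MemLp g 2 μ →
      (fun η => (∫ ω, B η ω * g ω ∂μ)
          - (η * ∫ ω, B0 ω * g ω ∂μ + η ^ 2 * ∫ ω, R0 ω * g ω ∂μ))
        =o[𝓝[>] (0:ℝ)] fun η => η ^ 2)
    (hstrong : Filter.Tendsto (fun η => ∫ ω, (B η ω / η - B0 ω) ^ 2 ∂μ)
      (𝓝[>] (0:ℝ)) (𝓝 0))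
    (P1 P2 : (ℝ → ℝ) → ℝ)
    (hexp : ∀ φ : ℝ → ℝ, ContDiff ℝ (⊤ : ℕ∞) φ →
      (fun η => (∫ ω, φ (B η ω) ∂μ) - (φ 0 + η * P1 φ + η ^ 2 * P2 φ))
        =o[𝓝[>] (0:ℝ)] fun η => η ^ 2) :
    (∀ φ : ℝ → ℝ, ContDiff ℝ (⊤ : ℕ∞) φ → P1 φ = (∫ ω, B0 ω ∂μ) * deriv φ 0) ∧
    (∀ φ : ℝ → ℝ, ContDiff ℝ (⊤ : ℕ∞) φ →
      P2 φ = (∫ ω, (B0 ω) ^ 2 ∂μ) / 2 * deriv (deriv φ) 0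
        + (∫ ω, R0 ω ∂μ) * deriv φ 0) := by
  classical
  -- nonemptiness and M ≥ 0
  have hne : Nonempty Ω := by
    by_contra h
    rw [not_nonempty_iff] at h
    have h1 : μ Set.univ = 1 := measure_univ
    rw [Set.univ_eq_empty_iff.mpr h, measure_empty] at h1
    exact zero_ne_one h1
  obtain ⟨ω0⟩ := hne
  have hM0 : 0 ≤ M := (abs_nonneg _).trans (hbdd 1 one_pos ω0)
  set l : Filter ℝ := 𝓝[>] (0:ℝ) with hldef
  have hpos : ∀ᶠ η in l, (0:ℝ) < η := self_mem_nhdsWithin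
  have hid : Tendsto (fun η : ℝ => η) l (𝓝 0) := tendsto_id.mono_right nhdsWithin_le_nhds
  have hsq0 : Tendsto (fun η : ℝ => η ^ 2) l (𝓝 0) := by
    have h0 := (hid.mul hid)
    rw [mul_zero] at h0
    refine h0.congr ?_
    intro η; rw [pow_two]
  set a : ℝ := ∫ ω, B0 ω ∂μ with ha
  set rE : ℝ := ∫ ω, R0 ω ∂μ with hrE
  set s : ℝ := ∫ ω, (B0 ω) ^ 2 ∂μ with hs
  have hs0 : 0 ≤ s := by rw [hs]; exact integral_nonneg fun ω => sq_nonneg _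
  -- eventual a.e. strong measurability of B η
  have hmeas : ∀ᶠ η in l, AEStronglyMeasurable (B η) μ := by
    have hφ1 : ContDiff ℝ (⊤ : ℕ∞) (fun x : ℝ => 1 + x) := contDiff_const.add contDiff_id
    have h1 := hexp _ hφ1
    have h2 : Tendsto (fun η => (∫ ω, (1 + B η ω) ∂μ)
        - ((1:ℝ) + η * P1 (fun x => 1 + x) + η ^ 2 * P2 (fun x => 1 + x))) l (𝓝 0) := by
      have := h1.isBigO.trans_tendsto hsq0
      simpa using this
    have h3 : Tendsto (fun η => (1:ℝ) + η * P1 (fun x => 1 + x)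
        + η ^ 2 * P2 (fun x => 1 + x)) l (𝓝 1) := by
      have hC : Tendsto (fun _ : ℝ => (1:ℝ)) l (𝓝 1) := tendsto_const_nhds
      have hA : Tendsto (fun η : ℝ => η * P1 (fun x => 1 + x)) l (𝓝 0) := by
        simpa using hid.mul_const (P1 (fun x => 1 + x))
      have hB : Tendsto (fun η : ℝ => η ^ 2 * P2 (fun x => 1 + x)) l (𝓝 0) := by
        simpa using hsq0.mul_const (P2 (fun x => 1 + x))
      simpa using (hC.add hA).add hB
    have hto : Tendsto (fun η => ∫ ω, (1 + B η ω) ∂μ) l (𝓝 1) := by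
      have := h2.add h3
      simp only [zero_add, sub_add_cancel] at this
      exact this
    have hev : ∀ᶠ η in l, (1/2 : ℝ) < ∫ ω, (1 + B η ω) ∂μ :=
      hto.eventually (lt_mem_nhds (by norm_num))
    filter_upwards [hev] with η hη
    have hint : Integrable (fun ω => 1 + B η ω) μ := by
      by_contra hc
      rw [integral_undef hc] at hη
      norm_num at hη
    have h5 := (hint.sub (integrable_const 1)).aestronglyMeasurable
    exact h5.congr (Eventually.of_forall fun ω => by simp)
  -- integrability facts
  have hfacts : ∀ η : ℝ, 0 < η → AEStronglyMeasurable (B η) μ →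
      Integrable (B η) μ ∧ Integrable (fun ω => B η ω ^ 2) μ ∧
      Integrable (fun ω => (B η ω / η) ^ 2) μ ∧
      Integrable (fun ω => (B η ω / η) * B0 ω) μ ∧
      Integrable (fun ω => (B η ω / η - B0 ω) ^ 2) μ := by
    intro η hη hm
    have hb := hbdd η hη
    have hIb : Integrable (B η) μ := (integrable_const M).mono' hm
      (Eventually.of_forall fun ω => by rw [Real.norm_eq_abs]; exact hb ω)
    have hmsq : AEStronglyMeasurable (fun ω => B η ω ^ 2) μ := by
      exact (hm.mul hm).congr (Eventually.of_forall fun ω => by simp [pow_two])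
    have hIb2 : Integrable (fun ω => B η ω ^ 2) μ := (integrable_const (M ^ 2)).mono' hmsq
      (Eventually.of_forall fun ω => by
        rw [Real.norm_eq_abs, abs_pow]
        exact pow_le_pow_left₀ (abs_nonneg _) (hb ω) 2)
    have hmX : AEStronglyMeasurable (fun ω => B η ω / η) μ := by
      simpa [div_eq_mul_inv] using hm.mul_const η⁻¹
    have hbX : ∀ ω, |B η ω / η| ≤ M / η := fun ω => by
      rw [abs_div, abs_of_pos hη]
      gcongr
      exact hb ω
    have hmX2 : AEStronglyMeasurable (fun ω => (B η ω / η) ^ 2) μ := by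
      exact (hmX.mul hmX).congr (Eventually.of_forall fun ω => by simp [pow_two])
    have hIX2 : Integrable (fun ω => (B η ω / η) ^ 2) μ :=
      (integrable_const ((M / η) ^ 2)).mono' hmX2
        (Eventually.of_forall fun ω => by
          rw [Real.norm_eq_abs, abs_pow]
          exact pow_le_pow_left₀ (abs_nonneg _) (hbX ω) 2)
    have hIXB : Integrable (fun ω => (B η ω / η) * B0 ω) μ :=
      (hB0.integrable one_le_two).bdd_mul hmX (Eventually.of_forall fun ω => by rw [Real.norm_eq_abs]; exact hbX ω)
    have hIXD : Integrable (fun ω => (B η ω / η - B0 ω) ^ 2) μ := by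
      have heq : (fun ω => (B η ω / η - B0 ω) ^ 2)
          = fun ω => ((B η ω / η) ^ 2 - 2 * ((B η ω / η) * B0 ω)) + B0 ω ^ 2 :=
        funext fun ω => by ring
      rw [heq]
      exact (hIX2.sub (hIXB.const_mul 2)).add hB0.integrable_sq
    exact ⟨hIb, hIb2, hIX2, hIXB, hIXD⟩
  -- T1
  have T1 : (fun η => (∫ ω, B η ω ∂μ) - (η * a + η ^ 2 * rE)) =o[l] (fun η => η ^ 2) := by
    have h1 := hweak (fun _ => (1:ℝ)) (memLp_const 1)
    simp only [mul_one] at h1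
    rw [ha, hrE]
    exact h1
  -- cross term
  have hcross : Tendsto (fun η => ∫ ω, (B η ω / η) * B0 ω ∂μ) l (𝓝 s) := by
    have hwB0 := hweak B0 hB0
    have hBB : (∫ ω, B0 ω * B0 ω ∂μ) = s := by
      rw [hs]
      exact integral_congr_ae (Eventually.of_forall fun ω => (pow_two _).symm)
    rw [hBB] at hwB0
    have hηO : (fun η : ℝ => η ^ 2) =O[l] (fun η : ℝ => η) := by
      rw [isBigO_iff]
      refine ⟨1, ?_⟩
      filter_upwards [hpos, hid.eventually (gt_mem_nhds one_pos)] with η h1 h2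
      rw [Real.norm_eq_abs, Real.norm_eq_abs, abs_of_pos h1, abs_of_pos (by positivity : (0:ℝ) < η ^ 2)]
      nlinarith
    have h1 : (fun η => (∫ ω, B η ω * B0 ω ∂μ)
        - (η * s + η ^ 2 * ∫ ω, R0 ω * B0 ω ∂μ)) =o[l] (fun η : ℝ => η) :=
      hwB0.trans_isBigO hηO
    have h2 := h1.tendsto_div_nhds_zero
    have h4 : Tendsto (fun η => ((∫ ω, B η ω * B0 ω ∂μ)
        - (η * s + η ^ 2 * ∫ ω, R0 ω * B0 ω ∂μ)) / η
        + (s + η * ∫ ω, R0 ω * B0 ω ∂μ)) l (𝓝 s) := by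
      have hC : Tendsto (fun _ : ℝ => s) l (𝓝 s) := tendsto_const_nhds
      have hB : Tendsto (fun η : ℝ => η * ∫ ω, R0 ω * B0 ω ∂μ) l (𝓝 0) := by
        simpa using hid.mul_const (∫ ω, R0 ω * B0 ω ∂μ)
      simpa using h2.add (hC.add hB)
    have h3 : Tendsto (fun η => (∫ ω, B η ω * B0 ω ∂μ) / η) l (𝓝 s) := by
      refine h4.congr' ?_
      filter_upwards [hpos] with η hη
      have hne : η ≠ 0 := ne_of_gt hη
      field_simp
      ring
    refine h3.congr' ?_
    filter_upwards [hpos] with η hη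
    have hne : η ≠ 0 := ne_of_gt hη
    have : (fun ω => (B η ω / η) * B0 ω) = fun ω => (1 / η) * (B η ω * B0 ω) :=
      funext fun ω => by ring
    rw [this, integral_const_mul, one_div, inv_mul_eq_div]
  -- hQ
  have hQ : Tendsto (fun η => ∫ ω, (B η ω / η) ^ 2 ∂μ) l (𝓝 s) := by
    have base : Tendsto (fun η => ((∫ ω, (B η ω / η - B0 ω) ^ 2 ∂μ)
        + 2 * (∫ ω, (B η ω / η) * B0 ω ∂μ)) - s) l (𝓝 s) := by
      have := (hstrong.add (hcross.const_mul 2)).sub_const s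
      rw [show (0 : ℝ) + 2 * s - s = s from by ring] at this
      exact this
    refine base.congr' ?_
    filter_upwards [hpos, hmeas] with η hη hm
    obtain ⟨_, _, hIX2, hIXB, hIXD⟩ := hfacts η hη hm
    have e1 : ∫ ω, (B η ω / η - B0 ω) ^ 2 ∂μ
        = (∫ ω, (B η ω / η) ^ 2 ∂μ) - 2 * (∫ ω, (B η ω / η) * B0 ω ∂μ) + s := by
      have heq : (fun ω => (B η ω / η - B0 ω) ^ 2)
          = fun ω => ((B η ω / η) ^ 2 - 2 * ((B η ω / η) * B0 ω)) + B0 ω ^ 2 :=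
        funext fun ω => by ring
      have hI1 : Integrable (fun ω => (B η ω / η) ^ 2 - 2 * (B η ω / η * B0 ω)) μ :=
        hIX2.sub (hIXB.const_mul 2)
      have e2 : ∫ ω, ((B η ω / η) ^ 2 - 2 * (B η ω / η * B0 ω) + B0 ω ^ 2) ∂μ
          = (∫ ω, ((B η ω / η) ^ 2 - 2 * (B η ω / η * B0 ω)) ∂μ) + ∫ ω, B0 ω ^ 2 ∂μ :=
        integral_add hI1 hB0.integrable_sq
      have e3 : ∫ ω, ((B η ω / η) ^ 2 - 2 * (B η ω / η * B0 ω)) ∂μ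
          = (∫ ω, (B η ω / η) ^ 2 ∂μ) - ∫ ω, 2 * (B η ω / η * B0 ω) ∂μ :=
        integral_sub hIX2 (hIXB.const_mul 2)
      rw [heq, e2, e3, integral_const_mul, ← hs]
    rw [e1]; ring
  -- T2
  have T2 : (fun η => (∫ ω, B η ω ^ 2 ∂μ) - η ^ 2 * s) =o[l] (fun η => η ^ 2) := by
    rw [isLittleO_iff_tendsto' (by
      filter_upwards [hpos] with η hη h
      exact absurd h (by positivity))]
    have base : Tendsto (fun η => (∫ ω, (B η ω / η) ^ 2 ∂μ) - s) l (𝓝 0) := by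
      have := hQ.sub_const s
      rwa [sub_self] at this
    refine base.congr' ?_
    filter_upwards [hpos, hmeas] with η hη hm
    have hne : η ≠ 0 := ne_of_gt hη
    have hqQ : ∫ ω, B η ω ^ 2 ∂μ = η ^ 2 * ∫ ω, (B η ω / η) ^ 2 ∂μ := by
      rw [← integral_const_mul]
      exact integral_congr_ae (Eventually.of_forall fun ω => by field_simp)
    rw [hqQ]
    field_simp
  -- the key identification, per φ
  have key : ∀ φ : ℝ → ℝ, ContDiff ℝ (⊤ : ℕ∞) φ →
      P1 φ = a * deriv φ 0 ∧ P2 φ = s / 2 * deriv (deriv φ) 0 + rE * deriv φ 0 := by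
    intro φ hφ
    set c1 : ℝ := deriv φ 0 with hc1
    set c2 : ℝ := deriv (deriv φ) 0 with hc2
    set ρ : ℝ → ℝ := fun x => φ x - φ 0 - c1 * x - c2 / 2 * x ^ 2 with hρdef
    have hρcont : Continuous ρ := by
      rw [hρdef]
      exact ((hφ.continuous.sub continuous_const).sub
        (continuous_const.mul continuous_id)).sub (continuous_const.mul (continuous_pow 2))
    obtain ⟨C0, hC0⟩ :=
      (isCompact_Icc (a := -M) (b := M)).exists_bound_of_continuousOn hρcont.continuousOn
    set Cρ : ℝ := max C0 1 with hCρdef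
    have hCρpos : (0:ℝ) < Cρ := lt_of_lt_of_le one_pos (le_max_right _ _)
    have hCρ : ∀ x : ℝ, |x| ≤ M → |ρ x| ≤ Cρ := by
      intro x hx
      have hmem : x ∈ Set.Icc (-M) M := by
        obtain ⟨h1, h2⟩ := abs_le.mp hx
        exact ⟨h1, h2⟩
      calc |ρ x| = ‖ρ x‖ := (Real.norm_eq_abs _).symm
        _ ≤ C0 := hC0 x hmem
        _ ≤ Cρ := le_max_left _ _
    -- T3
    have T3 : (fun η => ∫ ω, ρ (B η ω) ∂μ) =o[l] (fun η => η ^ 2) := by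
      rw [isLittleO_iff]
      intro ε hε
      set ε1 : ℝ := ε / (4 * (s + 1)) with hε1
      have hε1pos : 0 < ε1 := by rw [hε1]; positivity
      obtain ⟨δ, hδpos, hδ⟩ := stmt17_taylor hφ hε1pos
      rw [← hc1, ← hc2] at hδ
      obtain ⟨K, hKpos, hK⟩ := stmt17_tail μ B0 hB0 (ε := ε * δ ^ 2 / (16 * Cρ)) (by positivity)
      set τ : ℝ := ∫ ω, (B0 ω ^ 2 - min (B0 ω ^ 2) K) ∂μ with hτdef
      have hτ0 : 0 ≤ τ := by
        rw [hτdef]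
        exact integral_nonneg fun ω => sub_nonneg.mpr (min_le_left _ _)
      have hImin : Integrable (fun ω => min (B0 ω ^ 2) K) μ :=
        (integrable_const K).mono'
          (((continuous_pow 2).min continuous_const).comp_aestronglyMeasurable
            hB0.aestronglyMeasurable)
          (Eventually.of_forall fun ω => by
            rw [Real.norm_eq_abs, abs_of_nonneg (le_min (sq_nonneg _) hKpos.le)]
            exact min_le_right _ _)
      have hItail : Integrable (fun ω => B0 ω ^ 2 - min (B0 ω ^ 2) K) μ :=
        hB0.integrable_sq.sub hImin
      -- eventual bounds
      have hQb : ∀ᶠ η in l, ∫ ω, (B η ω / η) ^ 2 ∂μ ≤ s + 1 :=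
        (hQ.eventually (gt_mem_nhds (lt_add_one s))).mono fun η h => le_of_lt h
      have hDb : ∀ᶠ η in l, (2 * Cρ / δ ^ 2) * (∫ ω, (B η ω / η - B0 ω) ^ 2 ∂μ) ≤ ε / 8 := by
        have h0 := hstrong.const_mul (2 * Cρ / δ ^ 2)
        rw [mul_zero] at h0
        exact h0.eventually (Iic_mem_nhds (by positivity))
      have hsmall : ∀ᶠ η in l, (4 * K * Cρ / δ ^ 4) * η ^ 2 ≤ ε / (8 * (s + 1)) := by
        have h0 := hsq0.const_mul (4 * K * Cρ / δ ^ 4)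
        rw [mul_zero] at h0
        exact h0.eventually (Iic_mem_nhds (by positivity))
      filter_upwards [hpos, hmeas, hQb, hDb, hsmall] with η hη hm hQη hDη hsm
      obtain ⟨hIb, hIb2, hIX2, hIXB, hIXD⟩ := hfacts η hη hm
      have hne : η ≠ 0 := ne_of_gt hη
      have hIρ : Integrable (fun ω => ρ (B η ω)) μ :=
        (integrable_const Cρ).mono' (hρcont.comp_aestronglyMeasurable hm)
          (Eventually.of_forall fun ω => by
            rw [Real.norm_eq_abs]; exact hCρ _ (hbdd η hη ω))
      -- master pointwise bound
      have master : ∀ ω, |ρ (B η ω)| ≤ ε1 * B η ω ^ 2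
          + (2 * Cρ / δ ^ 2 * η ^ 2) * (B η ω / η - B0 ω) ^ 2
          + (4 * K * Cρ / δ ^ 4 * η ^ 2) * B η ω ^ 2
          + (4 * Cρ / δ ^ 2 * η ^ 2) * (B0 ω ^ 2 - min (B0 ω ^ 2) K) := by
        intro ω
        set x : ℝ := B η ω with hxdef
        set b : ℝ := B0 ω with hbdef
        have hminb : min (b ^ 2) K ≤ b ^ 2 := min_le_left _ _
        have ht2 : (0:ℝ) ≤ (2 * Cρ / δ ^ 2 * η ^ 2) * (x / η - b) ^ 2 := by positivity
        have ht3 : (0:ℝ) ≤ (4 * K * Cρ / δ ^ 4 * η ^ 2) * x ^ 2 := by positivity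
        have ht4 : (0:ℝ) ≤ (4 * Cρ / δ ^ 2 * η ^ 2) * (b ^ 2 - min (b ^ 2) K) :=
          mul_nonneg (by positivity) (by linarith [hminb])
        rcases le_or_gt (|x|) δ with hcase | hcase
        · have h1 := hδ x hcase
          have : |ρ x| ≤ ε1 * x ^ 2 := h1
          nlinarith [this]
        · have hxM : |x| ≤ M := hbdd η hη ω
          have h1 : |ρ x| ≤ Cρ := hCρ x hxM
          have hδ2 : δ ^ 2 ≤ x ^ 2 := by nlinarith [abs_nonneg x, sq_abs x]
          have hX2 : x ^ 2 = η ^ 2 * (x / η) ^ 2 := by field_simp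
          have step2 : (x / η) ^ 2 ≤ 2 * (x / η - b) ^ 2 + 2 * b ^ 2 := by
            nlinarith [sq_nonneg (x / η - 2 * b)]
          have hb2 : η ^ 2 * b ^ 2 ≤ 2 * K * η ^ 2 * x ^ 2 / δ ^ 2
              + 2 * η ^ 2 * (b ^ 2 - min (b ^ 2) K) := by
            have hx2δ : (1:ℝ) ≤ x ^ 2 / δ ^ 2 := (one_le_div (by positivity)).mpr hδ2
            rcases le_or_gt (b ^ 2) (2 * K) with hbc | hbc
            · have h2 : η ^ 2 * b ^ 2 ≤ η ^ 2 * (2 * K) :=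
                mul_le_mul_of_nonneg_left hbc (sq_nonneg η)
              have h3 : η ^ 2 * (2 * K) ≤ η ^ 2 * (2 * K) * (x ^ 2 / δ ^ 2) :=
                le_mul_of_one_le_right (by positivity) hx2δ
              have h4 : (0:ℝ) ≤ 2 * η ^ 2 * (b ^ 2 - min (b ^ 2) K) :=
                mul_nonneg (by positivity) (by linarith [hminb])
              calc η ^ 2 * b ^ 2 ≤ η ^ 2 * (2 * K) * (x ^ 2 / δ ^ 2) := le_trans h2 h3
                _ = 2 * K * η ^ 2 * x ^ 2 / δ ^ 2 := by ring
                _ ≤ _ := by linarith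
            · have hmin : min (b ^ 2) K = K := min_eq_right (by linarith)
              have h2 : b ^ 2 ≤ 2 * (b ^ 2 - K) := by linarith
              have h3 : η ^ 2 * b ^ 2 ≤ η ^ 2 * (2 * (b ^ 2 - K)) :=
                mul_le_mul_of_nonneg_left h2 (sq_nonneg η)
              have h4 : (0:ℝ) ≤ 2 * K * η ^ 2 * x ^ 2 / δ ^ 2 := by positivity
              rw [hmin]
              calc η ^ 2 * b ^ 2 ≤ η ^ 2 * (2 * (b ^ 2 - K)) := h3
                _ = 2 * η ^ 2 * (b ^ 2 - K) := by ring
                _ ≤ _ := by linarith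
          have step1 : Cρ ≤ Cρ / δ ^ 2 * x ^ 2 := by
            rw [div_mul_eq_mul_div, le_div_iff₀ (by positivity)]
            calc Cρ * δ ^ 2 ≤ Cρ * x ^ 2 := mul_le_mul_of_nonneg_left hδ2 hCρpos.le
              _ = Cρ * x ^ 2 := rfl
          have hε1x : (0:ℝ) ≤ ε1 * x ^ 2 := by positivity
          have chain : Cρ ≤ (2 * Cρ / δ ^ 2 * η ^ 2) * (x / η - b) ^ 2
              + (4 * K * Cρ / δ ^ 4 * η ^ 2) * x ^ 2
              + (4 * Cρ / δ ^ 2 * η ^ 2) * (b ^ 2 - min (b ^ 2) K) := by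
            have c1' : Cρ / δ ^ 2 * x ^ 2 = Cρ / δ ^ 2 * (η ^ 2 * (x / η) ^ 2) := by
              rw [← hX2]
            have c2' : Cρ / δ ^ 2 * (η ^ 2 * (x / η) ^ 2)
                ≤ Cρ / δ ^ 2 * (η ^ 2 * (2 * (x / η - b) ^ 2 + 2 * b ^ 2)) := by
              refine mul_le_mul_of_nonneg_left ?_ (by positivity)
              exact mul_le_mul_of_nonneg_left step2 (sq_nonneg η)
            have c3' : Cρ / δ ^ 2 * (η ^ 2 * (2 * (x / η - b) ^ 2 + 2 * b ^ 2))
                = (2 * Cρ / δ ^ 2 * η ^ 2) * (x / η - b) ^ 2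
                  + (2 * Cρ / δ ^ 2) * (η ^ 2 * b ^ 2) := by ring
            have c4' : (2 * Cρ / δ ^ 2) * (η ^ 2 * b ^ 2)
                ≤ (2 * Cρ / δ ^ 2) * (2 * K * η ^ 2 * x ^ 2 / δ ^ 2
                  + 2 * η ^ 2 * (b ^ 2 - min (b ^ 2) K)) :=
              mul_le_mul_of_nonneg_left hb2 (by positivity)
            have c5' : (2 * Cρ / δ ^ 2) * (2 * K * η ^ 2 * x ^ 2 / δ ^ 2
                + 2 * η ^ 2 * (b ^ 2 - min (b ^ 2) K))
                = (4 * K * Cρ / δ ^ 4 * η ^ 2) * x ^ 2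
                  + (4 * Cρ / δ ^ 2 * η ^ 2) * (b ^ 2 - min (b ^ 2) K) := by
              field_simp
              ring
            calc Cρ ≤ Cρ / δ ^ 2 * x ^ 2 := step1
              _ = Cρ / δ ^ 2 * (η ^ 2 * (x / η) ^ 2) := c1'
              _ ≤ Cρ / δ ^ 2 * (η ^ 2 * (2 * (x / η - b) ^ 2 + 2 * b ^ 2)) := c2'
              _ = _ + (2 * Cρ / δ ^ 2) * (η ^ 2 * b ^ 2) := c3'
              _ ≤ _ := by rw [c5'] at c4'; linarith
          linarith [h1, hε1x, chain]
      -- integrate the master bound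
      have hRHSint : Integrable (fun ω => ε1 * B η ω ^ 2
          + (2 * Cρ / δ ^ 2 * η ^ 2) * (B η ω / η - B0 ω) ^ 2
          + (4 * K * Cρ / δ ^ 4 * η ^ 2) * B η ω ^ 2
          + (4 * Cρ / δ ^ 2 * η ^ 2) * (B0 ω ^ 2 - min (B0 ω ^ 2) K)) μ :=
        (((hIb2.const_mul ε1).add (hIXD.const_mul _)).add (hIb2.const_mul _)).add
          (hItail.const_mul _)
      have habs : |∫ ω, ρ (B η ω) ∂μ| ≤ ∫ ω, |ρ (B η ω)| ∂μ := by
        simpa [Real.norm_eq_abs] using norm_integral_le_integral_norm (fun ω => ρ (B η ω)) (μ := μ)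
      have hint1 : ∫ ω, |ρ (B η ω)| ∂μ ≤ ∫ ω, (ε1 * B η ω ^ 2
          + (2 * Cρ / δ ^ 2 * η ^ 2) * (B η ω / η - B0 ω) ^ 2
          + (4 * K * Cρ / δ ^ 4 * η ^ 2) * B η ω ^ 2
          + (4 * Cρ / δ ^ 2 * η ^ 2) * (B0 ω ^ 2 - min (B0 ω ^ 2) K)) ∂μ :=
        integral_mono hIρ.abs hRHSint master
      have hsplit : ∫ ω, (ε1 * B η ω ^ 2
          + (2 * Cρ / δ ^ 2 * η ^ 2) * (B η ω / η - B0 ω) ^ 2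
          + (4 * K * Cρ / δ ^ 4 * η ^ 2) * B η ω ^ 2
          + (4 * Cρ / δ ^ 2 * η ^ 2) * (B0 ω ^ 2 - min (B0 ω ^ 2) K)) ∂μ
          = ε1 * (∫ ω, B η ω ^ 2 ∂μ)
          + (2 * Cρ / δ ^ 2 * η ^ 2) * (∫ ω, (B η ω / η - B0 ω) ^ 2 ∂μ)
          + (4 * K * Cρ / δ ^ 4 * η ^ 2) * (∫ ω, B η ω ^ 2 ∂μ)
          + (4 * Cρ / δ ^ 2 * η ^ 2) * τ := by
        have hJ1 : Integrable (fun ω => ε1 * B η ω ^ 2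
            + (2 * Cρ / δ ^ 2 * η ^ 2) * (B η ω / η - B0 ω) ^ 2) μ :=
          (hIb2.const_mul ε1).add (hIXD.const_mul _)
        have hJ2 : Integrable (fun ω => ε1 * B η ω ^ 2
            + (2 * Cρ / δ ^ 2 * η ^ 2) * (B η ω / η - B0 ω) ^ 2
            + (4 * K * Cρ / δ ^ 4 * η ^ 2) * B η ω ^ 2) μ := hJ1.add (hIb2.const_mul _)
        have f1 : ∫ ω, (ε1 * B η ω ^ 2
            + (2 * Cρ / δ ^ 2 * η ^ 2) * (B η ω / η - B0 ω) ^ 2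
            + (4 * K * Cρ / δ ^ 4 * η ^ 2) * B η ω ^ 2
            + (4 * Cρ / δ ^ 2 * η ^ 2) * (B0 ω ^ 2 - min (B0 ω ^ 2) K)) ∂μ
            = (∫ ω, (ε1 * B η ω ^ 2
            + (2 * Cρ / δ ^ 2 * η ^ 2) * (B η ω / η - B0 ω) ^ 2
            + (4 * K * Cρ / δ ^ 4 * η ^ 2) * B η ω ^ 2) ∂μ)
            + ∫ ω, (4 * Cρ / δ ^ 2 * η ^ 2) * (B0 ω ^ 2 - min (B0 ω ^ 2) K) ∂μ :=
          integral_add hJ2 (hItail.const_mul _)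
        have f2 : ∫ ω, (ε1 * B η ω ^ 2
            + (2 * Cρ / δ ^ 2 * η ^ 2) * (B η ω / η - B0 ω) ^ 2
            + (4 * K * Cρ / δ ^ 4 * η ^ 2) * B η ω ^ 2) ∂μ
            = (∫ ω, (ε1 * B η ω ^ 2
            + (2 * Cρ / δ ^ 2 * η ^ 2) * (B η ω / η - B0 ω) ^ 2) ∂μ)
            + ∫ ω, (4 * K * Cρ / δ ^ 4 * η ^ 2) * B η ω ^ 2 ∂μ :=
          integral_add hJ1 (hIb2.const_mul _)
        have f3 : ∫ ω, (ε1 * B η ω ^ 2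
            + (2 * Cρ / δ ^ 2 * η ^ 2) * (B η ω / η - B0 ω) ^ 2) ∂μ
            = (∫ ω, ε1 * B η ω ^ 2 ∂μ)
            + ∫ ω, (2 * Cρ / δ ^ 2 * η ^ 2) * (B η ω / η - B0 ω) ^ 2 ∂μ :=
          integral_add (hIb2.const_mul ε1) (hIXD.const_mul _)
        rw [hτdef, f1, f2, f3,
          integral_const_mul, integral_const_mul, integral_const_mul, integral_const_mul]
      have hqQ : ∫ ω, B η ω ^ 2 ∂μ = η ^ 2 * ∫ ω, (B η ω / η) ^ 2 ∂μ := by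
        rw [← integral_const_mul]
        exact integral_congr_ae (Eventually.of_forall fun ω => by field_simp)
      have hQnn : 0 ≤ ∫ ω, (B η ω / η) ^ 2 ∂μ := integral_nonneg fun ω => sq_nonneg _
      have hDnn : 0 ≤ ∫ ω, (B η ω / η - B0 ω) ^ 2 ∂μ := integral_nonneg fun ω => sq_nonneg _
      -- per-term bounds
      have t1 : ε1 * (∫ ω, B η ω ^ 2 ∂μ) ≤ ε / 4 * η ^ 2 := by
        rw [hqQ]
        have h2 : η ^ 2 * (∫ ω, (B η ω / η) ^ 2 ∂μ) ≤ η ^ 2 * (s + 1) :=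
          mul_le_mul_of_nonneg_left hQη (sq_nonneg η)
        calc ε1 * (η ^ 2 * ∫ ω, (B η ω / η) ^ 2 ∂μ) ≤ ε1 * (η ^ 2 * (s + 1)) :=
              mul_le_mul_of_nonneg_left h2 hε1pos.le
          _ = ε / 4 * η ^ 2 := by
              rw [hε1]; field_simp
      have t2 : (2 * Cρ / δ ^ 2 * η ^ 2) * (∫ ω, (B η ω / η - B0 ω) ^ 2 ∂μ)
          ≤ ε / 8 * η ^ 2 := by
        have : (2 * Cρ / δ ^ 2 * η ^ 2) * (∫ ω, (B η ω / η - B0 ω) ^ 2 ∂μ)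
            = η ^ 2 * ((2 * Cρ / δ ^ 2) * (∫ ω, (B η ω / η - B0 ω) ^ 2 ∂μ)) := by ring
        rw [this]
        calc η ^ 2 * ((2 * Cρ / δ ^ 2) * (∫ ω, (B η ω / η - B0 ω) ^ 2 ∂μ))
            ≤ η ^ 2 * (ε / 8) := mul_le_mul_of_nonneg_left hDη (sq_nonneg η)
          _ = ε / 8 * η ^ 2 := by ring
      have t3 : (4 * K * Cρ / δ ^ 4 * η ^ 2) * (∫ ω, B η ω ^ 2 ∂μ) ≤ ε / 8 * η ^ 2 := by
        rw [hqQ]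
        have h2 : η ^ 2 * (∫ ω, (B η ω / η) ^ 2 ∂μ) ≤ η ^ 2 * (s + 1) :=
          mul_le_mul_of_nonneg_left hQη (sq_nonneg η)
        have h3 : (4 * K * Cρ / δ ^ 4 * η ^ 2) * (η ^ 2 * ∫ ω, (B η ω / η) ^ 2 ∂μ)
            ≤ (ε / (8 * (s + 1))) * (η ^ 2 * (s + 1)) :=
          mul_le_mul hsm h2 (by positivity) (by positivity)
        calc (4 * K * Cρ / δ ^ 4 * η ^ 2) * (η ^ 2 * ∫ ω, (B η ω / η) ^ 2 ∂μ)
            ≤ (ε / (8 * (s + 1))) * (η ^ 2 * (s + 1)) := h3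
          _ = ε / 8 * η ^ 2 := by
              field_simp
      have t4 : (4 * Cρ / δ ^ 2 * η ^ 2) * τ ≤ ε / 4 * η ^ 2 := by
        have h2 : (4 * Cρ / δ ^ 2) * τ ≤ (4 * Cρ / δ ^ 2) * (ε * δ ^ 2 / (16 * Cρ)) :=
          mul_le_mul_of_nonneg_left hK (by positivity)
        have h3 : (4 * Cρ / δ ^ 2) * (ε * δ ^ 2 / (16 * Cρ)) = ε / 4 := by
          field_simp
          ring
        calc (4 * Cρ / δ ^ 2 * η ^ 2) * τ = η ^ 2 * ((4 * Cρ / δ ^ 2) * τ) := by ring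
          _ ≤ η ^ 2 * ((4 * Cρ / δ ^ 2) * (ε * δ ^ 2 / (16 * Cρ))) :=
              mul_le_mul_of_nonneg_left h2 (sq_nonneg η)
          _ = ε / 4 * η ^ 2 := by rw [h3]; ring
      have hnorm : ‖(fun η => η ^ 2) η‖ = η ^ 2 := by
        simp [Real.norm_eq_abs, abs_of_pos (by positivity : (0:ℝ) < η ^ 2)]
      rw [Real.norm_eq_abs, hnorm]
      calc |∫ ω, ρ (B η ω) ∂μ| ≤ ∫ ω, |ρ (B η ω)| ∂μ := habs
        _ ≤ _ := hint1
        _ = _ := hsplit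
        _ ≤ ε / 4 * η ^ 2 + ε / 8 * η ^ 2 + ε / 8 * η ^ 2 + ε / 4 * η ^ 2 := by
            linarith [t1, t2, t3, t4]
        _ ≤ ε * η ^ 2 := by nlinarith [sq_nonneg η, hε.le]
    -- decomposition and conclusion
    have hdecomp : (fun η => (∫ ω, φ (B η ω) ∂μ)
        - (φ 0 + η * (a * c1) + η ^ 2 * (s / 2 * c2 + rE * c1)))
        =ᶠ[l] (fun η => c1 * ((∫ ω, B η ω ∂μ) - (η * a + η ^ 2 * rE))
          + c2 / 2 * ((∫ ω, B η ω ^ 2 ∂μ) - η ^ 2 * s)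
          + ∫ ω, ρ (B η ω) ∂μ) := by
      filter_upwards [hpos, hmeas] with η hη hm
      obtain ⟨hIb, hIb2, _, _, _⟩ := hfacts η hη hm
      have hIρ : Integrable (fun ω => ρ (B η ω)) μ :=
        (integrable_const Cρ).mono' (hρcont.comp_aestronglyMeasurable hm)
          (Eventually.of_forall fun ω => by
            rw [Real.norm_eq_abs]; exact hCρ _ (hbdd η hη ω))
      have heq : ∫ ω, φ (B η ω) ∂μ = φ 0 + c1 * (∫ ω, B η ω ∂μ)
          + c2 / 2 * (∫ ω, B η ω ^ 2 ∂μ) + ∫ ω, ρ (B η ω) ∂μ := by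
        have hfun : (fun ω => φ (B η ω))
            = fun ω => ((φ 0 + c1 * B η ω) + c2 / 2 * B η ω ^ 2) + ρ (B η ω) := by
          funext ω
          simp only [hρdef]
          ring
        have hg1 : Integrable (fun ω => φ 0 + c1 * B η ω) μ :=
          (integrable_const (φ 0)).add (hIb.const_mul c1)
        have hg2 : Integrable (fun ω => φ 0 + c1 * B η ω + c2 / 2 * B η ω ^ 2) μ :=
          hg1.add (hIb2.const_mul (c2 / 2))
        have g1 : ∫ ω, (φ 0 + c1 * B η ω + c2 / 2 * B η ω ^ 2 + ρ (B η ω)) ∂μ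
            = (∫ ω, (φ 0 + c1 * B η ω + c2 / 2 * B η ω ^ 2) ∂μ) + ∫ ω, ρ (B η ω) ∂μ :=
          integral_add hg2 hIρ
        have g2 : ∫ ω, (φ 0 + c1 * B η ω + c2 / 2 * B η ω ^ 2) ∂μ
            = (∫ ω, (φ 0 + c1 * B η ω) ∂μ) + ∫ ω, c2 / 2 * B η ω ^ 2 ∂μ :=
          integral_add hg1 (hIb2.const_mul (c2 / 2))
        have g3 : ∫ ω, (φ 0 + c1 * B η ω) ∂μ
            = (∫ ω, (φ 0 : ℝ) ∂μ) + ∫ ω, c1 * B η ω ∂μ :=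
          integral_add (integrable_const (φ 0)) (hIb.const_mul c1)
        rw [hfun, g1, g2, g3, integral_const, integral_const_mul, integral_const_mul]
        simp [measure_univ]
      rw [heq]
      ring
    have hMain : (fun η => (∫ ω, φ (B η ω) ∂μ)
        - (φ 0 + η * (a * c1) + η ^ 2 * (s / 2 * c2 + rE * c1))) =o[l] (fun η => η ^ 2) :=
      (((T1.const_mul_left c1).add (T2.const_mul_left (c2 / 2))).add T3).congr'
        hdecomp.symm (EventuallyEq.refl _ _)
    have hdiff := (hexp φ hφ).sub hMain
    have heq2 : (fun η : ℝ => (a * c1 - P1 φ) * η + ((s / 2 * c2 + rE * c1) - P2 φ) * η ^ 2)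
        = (fun η => ((∫ ω, φ (B η ω) ∂μ) - (φ 0 + η * P1 φ + η ^ 2 * P2 φ))
          - ((∫ ω, φ (B η ω) ∂μ)
            - (φ 0 + η * (a * c1) + η ^ 2 * (s / 2 * c2 + rE * c1)))) := by
      funext η
      ring
    have hu := stmt17_unique (c := a * c1 - P1 φ) (d := s / 2 * c2 + rE * c1 - P2 φ)
      (by rw [heq2]; exact hdiff)
    constructor
    · linarith [hu.1]
    · linarith [hu.2]
  exact ⟨fun φ hφ => (key φ hφ).1, fun φ hφ => (key φ hφ).2⟩
end
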